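/- arXiv:1509.02129 — 9 statements merged into one kernel-verified Lean document; each statement's English description precedes it below -/
import Mathlib

section
/- For all integers k ≥ 1 and n ≥ k, the set {v_1, v_2, …, v_k} is a resolving set for the k-path graph P(n,k). -/
/-- The `k`-path graph `P(n,k)`: vertices `v_1, …, v_n` (here `Fin n`, with `v_r`
corresponding to index `r - 1`), distinct vertices adjacent iff their indices
differ by at most `k`. -/
def kPathGraph (n k : ℕ) : SimpleGraph (Fin n) where
  Adj i j := i ≠ j ∧ |(i.val : ℤ) - j.val| ≤ k
  symm := by
    constructor
    intro i j h
    exact ⟨h.1.symm, by rw [abs_sub_comm]; exact h.2⟩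
  loopless := by
    constructor
    intro i h
    exact h.1 rfl

/-- `W` is a resolving set for `G`: every pair of distinct vertices is
distinguished by its distance to some element of `W`. -/
def IsResolvingSet {V : Type*} (G : SimpleGraph V) (W : Set V) : Prop :=
  ∀ u v : V, u ≠ v → ∃ w ∈ W, G.dist u w ≠ G.dist v w

section Aux

variable {n k : ℕ}

lemma kPath_walk_bound {a b : Fin n} (p : (kPathGraph n k).Walk a b) :
    |(a.val : ℤ) - b.val| ≤ k * p.length := by
  induction p with
  | nil => simp
  | @cons u v w h p ih =>
    have h1 : |(u.val : ℤ) - w.val| ≤ |(u.val : ℤ) - v.val| + |(v.val : ℤ) - w.val| :=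
      abs_sub_le _ _ _
    have h2 := h.2
    rw [SimpleGraph.Walk.length_cons]
    push_cast
    push_cast at ih
    linarith

lemma kPath_exists_walk (hk : 1 ≤ k) :
    ∀ D : ℕ, ∀ a b : Fin n, a.val ≤ b.val → b.val - a.val = D →
    ∃ p : (kPathGraph n k).Walk a b, p.length = (D + k - 1) / k := by
  intro D
  induction D using Nat.strong_induction_on with
  | _ D ih =>
    intro a b hab hD
    by_cases h0 : D = 0
    · have : a = b := Fin.ext (by omega)
      subst this
      exact ⟨SimpleGraph.Walk.nil, by simp [h0, Nat.div_eq_of_lt (by omega : k - 1 < k)]⟩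
    · by_cases h1 : D ≤ k
      · have hadj : (kPathGraph n k).Adj a b := by
          refine ⟨fun h => h0 ?_, ?_⟩
          · rw [h] at hD; omega
          · rw [abs_le]; constructor <;> push_cast <;> omega
        refine ⟨SimpleGraph.Walk.cons hadj SimpleGraph.Walk.nil, ?_⟩
        have h2 : (D + k - 1) / k = 1 :=
          Nat.div_eq_of_lt_le (by omega) (by omega)
        simp [h2]
      · have hlt : a.val + k < n := by
          have := b.isLt; omega
        set a' : Fin n := ⟨a.val + k, hlt⟩ with ha'
        have hadj : (kPathGraph n k).Adj a a' := by
          refine ⟨fun h => ?_, ?_⟩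
          · have := congrArg Fin.val h
            simp only [ha'] at this
            omega
          · have hv : (a'.val : ℤ) = (a.val : ℤ) + k := by
              show ((a.val + k : ℕ) : ℤ) = _
              push_cast; ring
            rw [hv, abs_le]
            constructor <;> omega
        obtain ⟨p, hp⟩ := ih (D - k) (by omega) a' b (by simp [ha']; omega) (by simp [ha']; omega)
        refine ⟨SimpleGraph.Walk.cons hadj p, ?_⟩
        rw [SimpleGraph.Walk.length_cons, hp]
        have : D + k - 1 = (D - k + k - 1) + k := by omega
        rw [this, Nat.add_div_right _ (by omega)]

lemma kPath_dist (hk : 1 ≤ k) (a b : Fin n) (hab : a.val ≤ b.val) :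
    (kPathGraph n k).dist a b = (b.val - a.val + k - 1) / k := by
  obtain ⟨p, hp⟩ := kPath_exists_walk hk _ a b hab rfl
  refine le_antisymm (hp ▸ SimpleGraph.dist_le p) ?_
  have hr : (kPathGraph n k).Reachable a b := ⟨p⟩
  obtain ⟨q, hq⟩ := hr.exists_walk_length_eq_dist
  have hb := kPath_walk_bound q
  rw [hq] at hb
  have habs : |(a.val : ℤ) - b.val| = ((b.val - a.val : ℕ) : ℤ) := by
    rw [abs_sub_comm, abs_of_nonneg (by push_cast; omega)]; push_cast; omega
  rw [habs] at hb
  have hD : b.val - a.val ≤ k * (kPathGraph n k).dist a b := by exact_mod_cast hb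
  calc (b.val - a.val + k - 1) / k ≤ (k * (kPathGraph n k).dist a b + (k - 1)) / k := by
        apply Nat.div_le_div_right; omega
    _ = (kPathGraph n k).dist a b := by
        rw [Nat.mul_add_div (by omega), Nat.div_eq_of_lt (by omega)]; omega

lemma kPath_key (hk : 1 ≤ k) (hn : k ≤ n) {u v : Fin n} (huv : u.val < v.val) :
    ∃ w : Fin n, w.val < k ∧ (kPathGraph n k).dist u w ≠ (kPathGraph n k).dist v w := by
  by_cases hu : u.val < k
  · refine ⟨u, hu, ?_⟩
    rw [SimpleGraph.dist_self, SimpleGraph.dist_comm,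
      kPath_dist hk u v (le_of_lt huv)]
    have : k ≤ v.val - u.val + k - 1 := by omega
    have := (Nat.one_le_div_iff (by omega : 0 < k)).2 this
    omega
  · refine ⟨⟨u.val % k, lt_of_lt_of_le (Nat.mod_lt _ (by omega)) hn⟩, Nat.mod_lt _ (by omega), ?_⟩
    set w : Fin n := ⟨u.val % k, lt_of_lt_of_le (Nat.mod_lt _ (by omega)) hn⟩ with hw
    have hwu : w.val ≤ u.val := Nat.mod_le _ _
    have hwv : w.val ≤ v.val := le_trans hwu (le_of_lt huv)
    rw [SimpleGraph.dist_comm, SimpleGraph.dist_comm (u := v) (v := w),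
      kPath_dist hk w u hwu, kPath_dist hk w v hwv]
    have hA : u.val - w.val = k * (u.val / k) := by
      conv_lhs => rw [← Nat.div_add_mod u.val k]
      simp [hw]
    have hdu : (u.val - w.val + k - 1) / k = u.val / k := by
      rw [hA]
      refine Nat.div_eq_of_lt_le ?_ ?_
      · rw [Nat.mul_comm]
        generalize k * (u.val / k) = t
        omega
      · rw [Nat.add_mul, Nat.one_mul, Nat.mul_comm]
        generalize u.val / k * k = t
        omega
    have hB : u.val - w.val + 1 ≤ v.val - w.val := by omega
    have hdv : u.val / k + 1 ≤ (v.val - w.val + k - 1) / k := by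
      have h1 : k * (u.val / k + 1) ≤ v.val - w.val + k - 1 := by
        rw [Nat.mul_add, Nat.mul_one, ← hA]
        omega
      calc u.val / k + 1 = k * (u.val / k + 1) / k := by
            rw [Nat.mul_div_cancel_left _ (by omega : 0 < k)]
        _ ≤ (v.val - w.val + k - 1) / k := Nat.div_le_div_right h1
    omega

end Aux

/-- For all integers `k ≥ 1` and `n ≥ k`, the set `{v_1, v_2, …, v_k}` is a
resolving set for the `k`-path graph `P(n,k)`. -/
theorem isResolvingSet_kPathGraph (k n : ℕ) (hk : 1 ≤ k) (hn : k ≤ n) :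
    IsResolvingSet (kPathGraph n k) {i : Fin n | i.val < k} := by
  intro u v huv
  have hval : u.val ≠ v.val := fun h => huv (Fin.ext h)
  rcases hval.lt_or_gt with h | h
  · obtain ⟨w, hw, hne⟩ := kPath_key hk hn h
    exact ⟨w, hw, hne⟩
  · obtain ⟨w, hw, hne⟩ := kPath_key hk hn h
    exact ⟨w, hw, hne.symm⟩
end

section
/- For all integers k ≥ 1 and n ≥ k + 1, the metric dimension of the k-path graph P(n,k) equals k. -/
/-- The metric dimension of a finite graph: the minimum cardinality of a
resolving set. -/
noncomputable def metricDim {V : Type*} [Fintype V] (G : SimpleGraph V) : ℕ :=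
  sInf {m | ∃ W : Finset V, IsResolvingSet G ↑W ∧ W.card = m}

namespace KPG

/-- ceiling division -/
def cd (d k : ℕ) : ℕ := (d + k - 1) / k

/-- natural absolute difference of indices -/
def D {n : ℕ} (i j : Fin n) : ℕ := (i.val - j.val) + (j.val - i.val)

variable {n k : ℕ}

lemma adj_iff {i j : Fin n} : (kPathGraph n k).Adj i j ↔ i ≠ j ∧ D i j ≤ k := by
  show (i ≠ j ∧ |(i.val : ℤ) - j.val| ≤ k) ↔ _
  unfold D
  rw [abs_le]
  constructor
  · rintro ⟨h1, h2, h3⟩; exact ⟨h1, by omega⟩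
  · rintro ⟨h1, h2⟩; exact ⟨h1, by omega, by omega⟩

lemma D_eq_zero {i j : Fin n} (h : D i j = 0) : i = j := by
  unfold D at h; ext; omega

lemma cd_mul_add (hk : 1 ≤ k) (q t : ℕ) (h1 : 1 ≤ t) (h2 : t ≤ k) :
    cd (k * q + t) k = q + 1 := by
  unfold cd
  have h : k * q + t + k - 1 = (t + k - 1) + k * q := by omega
  rw [h, Nat.add_mul_div_left _ _ (by omega : 0 < k)]
  have h2' : (t + k - 1) / k = 1 := by
    exact Nat.div_eq_of_lt_le (by omega) (by omega)
  omega

lemma cd_eq_one (hk : 1 ≤ k) {d : ℕ} (h1 : 1 ≤ d) (h2 : d ≤ k) : cd d k = 1 := by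
  have := cd_mul_add hk 0 d h1 h2
  simpa using this

lemma cd_zero (hk : 1 ≤ k) : cd 0 k = 0 := by
  unfold cd
  exact Nat.div_eq_of_lt (by omega)

lemma cd_le_iff (hk : 1 ≤ k) {d c : ℕ} : cd d k ≤ c ↔ d ≤ k * c := by
  unfold cd
  rw [Nat.div_le_iff_le_mul_add_pred (by omega)]
  omega

lemma cd_mono (hk : 1 ≤ k) {d e : ℕ} (h : d ≤ e) : cd d k ≤ cd e k :=
  Nat.div_le_div_right (by omega)

lemma exists_walk (hk : 1 ≤ k) (d : ℕ) : ∀ i j : Fin n, D i j = d →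
    ∃ p : (kPathGraph n k).Walk i j, p.length = cd d k := by
  induction d using Nat.strong_induction_on with
  | _ d ih =>
    intro i j hd
    rcases Nat.eq_zero_or_pos d with h0 | h0
    · subst h0
      obtain rfl := D_eq_zero hd
      exact ⟨SimpleGraph.Walk.nil, by simp [cd_zero hk]⟩
    rcases le_or_gt d k with hdk | hdk
    · -- single edge
      have hne : i ≠ j := by intro h; subst h; unfold D at hd; omega
      refine ⟨SimpleGraph.Walk.cons (adj_iff.mpr ⟨hne, by omega⟩) SimpleGraph.Walk.nil, ?_⟩
      simp [cd_eq_one hk h0 hdk]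
    · -- step by k towards j
      have hij : i.val ≠ j.val := by unfold D at hd; omega
      have hjn : j.val < n := j.isLt
      have hin : i.val < n := i.isLt
      -- define midpoint
      rcases lt_or_gt_of_ne hij with hlt | hgt
      · have hdval : j.val - i.val = d := by unfold D at hd; omega
        have hm : i.val + k < n := by omega
        set m : Fin n := ⟨i.val + k, by omega⟩ with hmdef
        have hDmj : D m j = d - k := by unfold D; simp only [hmdef]; omega
        obtain ⟨p, hp⟩ := ih (d - k) (by omega) m j hDmj
        have hadj : (kPathGraph n k).Adj i m := by
          refine adj_iff.mpr ⟨?_, ?_⟩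
          · intro h; apply_fun Fin.val at h; simp only [hmdef] at h; omega
          · unfold D; simp only [hmdef]; omega
        refine ⟨SimpleGraph.Walk.cons hadj p, ?_⟩
        have goal : cd (d - k) k + 1 = cd d k := by
          unfold cd
          have h1 : d - k + k - 1 = d - 1 := by omega
          have h2 : d + k - 1 = (d - 1) + k := by omega
          rw [h1, h2, Nat.add_div_right _ (by omega)]
        simp only [SimpleGraph.Walk.length_cons, hp]
        omega
      · have hdval : i.val - j.val = d := by unfold D at hd; omega
        set m : Fin n := ⟨i.val - k, by omega⟩ with hmdef
        have hDmj : D m j = d - k := by unfold D; simp only [hmdef]; omega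
        obtain ⟨p, hp⟩ := ih (d - k) (by omega) m j hDmj
        have hadj : (kPathGraph n k).Adj i m := by
          refine adj_iff.mpr ⟨?_, ?_⟩
          · intro h; apply_fun Fin.val at h; simp only [hmdef] at h; omega
          · unfold D; simp only [hmdef]; omega
        refine ⟨SimpleGraph.Walk.cons hadj p, ?_⟩
        have goal : cd (d - k) k + 1 = cd d k := by
          unfold cd
          have h1 : d - k + k - 1 = d - 1 := by omega
          have h2 : d + k - 1 = (d - 1) + k := by omega
          rw [h1, h2, Nat.add_div_right _ (by omega)]
        simp only [SimpleGraph.Walk.length_cons, hp]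
        omega

lemma walk_le {i j : Fin n} (p : (kPathGraph n k).Walk i j) : D i j ≤ p.length * k := by
  induction p with
  | nil => unfold D; omega
  | @cons a b c hab p ih =>
    obtain ⟨-, h2⟩ := adj_iff.mp hab
    have htri : D a c ≤ D a b + D b c := by unfold D; omega
    simp only [SimpleGraph.Walk.length_cons]
    calc D a c ≤ D a b + D b c := htri
      _ ≤ k + p.length * k := by omega
      _ = (p.length + 1) * k := by ring

lemma dist_eq (hk : 1 ≤ k) (i j : Fin n) :
    (kPathGraph n k).dist i j = cd (D i j) k := by
  obtain ⟨p, hp⟩ := exists_walk hk (D i j) i j rfl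
  refine le_antisymm (hp ▸ SimpleGraph.dist_le p) ?_
  have hr : (kPathGraph n k).Reachable i j := ⟨p⟩
  obtain ⟨q, hq⟩ := hr.exists_walk_length_eq_dist
  have := walk_le q
  rw [hq] at this
  rw [cd_le_iff hk]
  exact this.trans (le_of_eq (mul_comm _ _))


lemma cd_mul (hk : 1 ≤ k) (q : ℕ) : cd (k * q) k = q := by
  rcases Nat.eq_zero_or_pos q with h | h
  · subst h; simpa using cd_zero (k := k) hk
  · obtain ⟨q', rfl⟩ : ∃ q', q = q' + 1 := ⟨q - 1, by omega⟩
    have hkq : k * (q' + 1) = k * q' + k := by ring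
    rw [hkq, cd_mul_add hk q' k hk le_rfl]

lemma card_filter_lt (m : ℕ) (hm : m ≤ n) :
    (Finset.univ.filter (fun v : Fin n => v.val < m)).card = m := by
  have h : (Finset.univ.filter (fun v : Fin n => v.val < m)).card = (Finset.range m).card := by
    apply Finset.card_bij (fun v _ => v.val)
    · intro a ha; rw [Finset.mem_filter] at ha; exact Finset.mem_range.mpr ha.2
    · intro a ha b hb h; exact Fin.ext h
    · intro b hb; rw [Finset.mem_range] at hb
      exact ⟨⟨b, by omega⟩, Finset.mem_filter.mpr ⟨Finset.mem_univ _, hb⟩, rfl⟩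
  rw [h, Finset.card_range]

/-! ### Upper bound -/

lemma resolve_aux (hk : 1 ≤ k) (hn : k + 1 ≤ n) {u v : Fin n} (h : u.val < v.val) :
    ∃ w : Fin n, w.val < k ∧
      (kPathGraph n k).dist u w ≠ (kPathGraph n k).dist v w := by
  have hmod : u.val % k < k := Nat.mod_lt _ (by omega)
  refine ⟨⟨u.val % k, by omega⟩, hmod, ?_⟩
  rw [dist_eq hk, dist_eq hk]
  have hle : u.val % k ≤ u.val := Nat.mod_le _ _
  have hdm := Nat.div_add_mod u.val k
  set q := u.val / k with hq
  set m := u.val % k with hm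
  have hDu : D u ⟨m, by omega⟩ = k * q := by unfold D; simp only []; omega
  have hDv : D v ⟨m, by omega⟩ = v.val - m := by unfold D; simp only []; omega
  rw [hDu, hDv, cd_mul hk]
  have h1 : k * q + 1 ≤ v.val - m := by omega
  have := cd_mono hk (k := k) h1
  rw [cd_mul_add hk q 1 le_rfl hk] at this
  omega

lemma resolving_exists (hk : 1 ≤ k) (hn : k + 1 ≤ n) :
    ∃ W : Finset (Fin n), IsResolvingSet (kPathGraph n k) ↑W ∧ W.card = k := by
  refine ⟨Finset.univ.filter (fun w : Fin n => w.val < k), ?_, ?_⟩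
  · intro u v huv
    have hne : u.val ≠ v.val := fun h => huv (Fin.ext h)
    rcases lt_or_gt_of_ne hne with h | h
    · obtain ⟨w, hw, hd⟩ := resolve_aux hk hn h
      exact ⟨w, by simp [hw], hd⟩
    · obtain ⟨w, hw, hd⟩ := resolve_aux hk hn h
      exact ⟨w, by simp [hw], hd.symm⟩
  · exact card_filter_lt k (by omega)

/-! ### Lower bound -/

def rr (k : ℕ) {n : ℕ} (w : Fin n) : ℕ := (w.val - 1) % k + 1

lemma sep (hk : 1 ≤ k) {W : Finset (Fin n)} (hW : IsResolvingSet (kPathGraph n k) ↑W)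
    {x y : Fin n} (hx : x ∉ W) (hy : y ∉ W) (hxy : x.val < y.val) (hyk : y.val ≤ k) :
    ∃ w ∈ W, k < w.val ∧ x.val < rr k w ∧ rr k w ≤ y.val := by
  obtain ⟨w, hwW, hne⟩ := hW x y (fun h => by apply_fun Fin.val at h; omega)
  rw [Finset.mem_coe] at hwW
  rw [dist_eq hk, dist_eq hk] at hne
  have hxw : x.val ≠ w.val := fun h => hx ((Fin.ext h : x = w) ▸ hwW)
  have hyw : y.val ≠ w.val := fun h => hy ((Fin.ext h : y = w) ▸ hwW)
  have hwk : k < w.val := by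
    by_contra hle
    push_neg at hle
    apply hne
    have hDx : 1 ≤ D x w ∧ D x w ≤ k := by unfold D; omega
    have hDy : 1 ≤ D y w ∧ D y w ≤ k := by unfold D; omega
    rw [cd_eq_one hk hDx.1 hDx.2, cd_eq_one hk hDy.1 hDy.2]
  refine ⟨w, hwW, hwk, ?_⟩
  have hrmod : (w.val - 1) % k < k := Nat.mod_lt _ (by omega)
  have hr1 : 1 ≤ rr k w ∧ rr k w ≤ k := by unfold rr; omega
  obtain ⟨q, hdm⟩ : ∃ q, k * q + (w.val - 1) % k = w.val - 1 :=
    ⟨_, Nat.div_add_mod _ _⟩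
  have hwqr : w.val = k * q + rr k w := by unfold rr; omega
  have hqpos : 1 ≤ q := by
    rcases Nat.eq_zero_or_pos q with h0 | h0
    · exfalso; rw [h0, Nat.mul_zero] at hwqr; omega
    · exact h0
  obtain ⟨q', rfl⟩ : ∃ q', q = q' + 1 := ⟨q - 1, by omega⟩
  have hkq : k * (q' + 1) = k * q' + k := by ring
  rw [hkq] at hwqr
  have key : ∀ z : ℕ, z ≤ k → cd (w.val - z) k = if z < rr k w then q' + 2 else q' + 1 := by
    intro z hz
    split_ifs with hzr
    · have hz1 : w.val - z = k * (q' + 1) + (rr k w - z) := by rw [hkq]; omega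
      rw [hz1, cd_mul_add hk (q' + 1) (rr k w - z) (by omega) (by omega)]
    · push_neg at hzr
      have hz2 : w.val - z = k * q' + (k + rr k w - z) := by omega
      rw [hz2, cd_mul_add hk q' (k + rr k w - z) (by omega) (by omega)]
  have hDx : D x w = w.val - x.val := by unfold D; omega
  have hDy : D y w = w.val - y.val := by unfold D; omega
  rw [hDx, hDy, key x.val (by omega), key y.val hyk] at hne
  split_ifs at hne with h1 h2 h2 <;> omega

lemma lower_bound (hk : 1 ≤ k) (hn : k + 1 ≤ n) {W : Finset (Fin n)}
    (hW : IsResolvingSet (kPathGraph n k) ↑W) : k ≤ W.card := by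
  set S : Finset (Fin n) := Finset.univ.filter (fun v : Fin n => v.val ≤ k) with hS
  have hScard : S.card = k + 1 := by
    have heq : S = Finset.univ.filter (fun v : Fin n => v.val < k + 1) := by
      rw [hS]; ext v; simp [Nat.lt_succ_iff]
    rw [heq, card_filter_lt (k + 1) hn]
  set T : Finset (Fin n) := S \ W with hT
  set W2 : Finset (Fin n) := W.filter (fun w => k < w.val) with hW2
  set f : Fin n → ℕ := fun x => (W2.filter (fun w => rr k w ≤ x.val)).card with hf
  have hmono : ∀ x ∈ T, ∀ y ∈ T, x.val < y.val → f x < f y := by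
    intro x hxT y hyT hxy
    rw [hT, Finset.mem_sdiff, hS, Finset.mem_filter] at hxT hyT
    obtain ⟨w, hwW, hwk, hw1, hw2⟩ := sep hk hW hxT.2 hyT.2 hxy hyT.1.2
    apply Finset.card_lt_card
    rw [Finset.ssubset_def]
    constructor
    · intro a ha
      rw [Finset.mem_filter] at ha ⊢
      exact ⟨ha.1, by omega⟩
    · intro hsub
      have hwy : w ∈ W2.filter (fun w => rr k w ≤ y.val) := by
        rw [hW2]
        simp only [Finset.mem_filter]
        exact ⟨⟨hwW, hwk⟩, hw2⟩
      have hmem := hsub hwy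
      rw [Finset.mem_filter] at hmem
      omega
  have hTcard : T.card ≤ W2.card + 1 := by
    have hcard : T.card ≤ (Finset.range (W2.card + 1)).card := by
      apply Finset.card_le_card_of_injOn f
      · intro a _
        rw [Finset.mem_coe, Finset.mem_range]
        have : f a ≤ W2.card := Finset.card_le_card (Finset.filter_subset _ _)
        omega
      · intro a ha b hb hab
        by_contra hne
        have hvne : a.val ≠ b.val := fun h => hne (Fin.ext h)
        rcases lt_or_gt_of_ne hvne with h | h
        · exact absurd hab (Nat.ne_of_lt (hmono a ha b hb h))
        · exact absurd hab.symm (Nat.ne_of_lt (hmono b hb a ha h))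
    simpa using hcard
  have hsd : T.card + (S ∩ W).card = S.card := Finset.card_sdiff_add_card_inter S W
  have hdisj : Disjoint (S ∩ W) W2 := by
    rw [Finset.disjoint_left]
    intro a ha haW2
    rw [Finset.mem_inter, hS, Finset.mem_filter] at ha
    rw [hW2, Finset.mem_filter] at haW2
    omega
  have hunion : (S ∩ W) ∪ W2 ⊆ W := by
    intro a ha
    rcases Finset.mem_union.mp ha with h | h
    · exact (Finset.mem_inter.mp h).2
    · exact (Finset.mem_filter.mp h).1
  have hle2 : (S ∩ W).card + W2.card ≤ W.card := by
    rw [← Finset.card_union_of_disjoint hdisj]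
    exact Finset.card_le_card hunion
  omega

end KPG

/-- For all integers `k ≥ 1` and `n ≥ k + 1`, the metric dimension of the
`k`-path graph `P(n,k)` equals `k`. -/
theorem metricDim_kPathGraph (k n : ℕ) (hk : 1 ≤ k) (hn : k + 1 ≤ n) :
    metricDim (kPathGraph n k) = k := by
  unfold metricDim
  obtain ⟨W, hW, hcard⟩ := KPG.resolving_exists hk hn
  have hmem : k ∈ {m | ∃ W : Finset (Fin n),
      IsResolvingSet (kPathGraph n k) ↑W ∧ W.card = m} := ⟨W, hW, hcard⟩
  refine le_antisymm (Nat.sInf_le hmem) (le_csInf ⟨k, hmem⟩ ?_)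
  rintro m ⟨W', hW', rfl⟩
  exact KPG.lower_bound hk hn hW'
end

section
/- Every 2-tree with more than three vertices contains two non-adjacent vertices each of degree two. -/
/-- A graph on `Fin n` is a 2-tree construction sequence if the first three
vertices form a triangle and every later vertex is joined to exactly the two
endpoints of an edge among the earlier vertices. -/
def IsTwoTreeSeq {n : ℕ} (G : SimpleGraph (Fin n)) : Prop :=
  3 ≤ n ∧
  (∀ i j : Fin n, i.val < 3 → j.val < 3 → i ≠ j → G.Adj i j) ∧
  (∀ i : Fin n, 3 ≤ i.val → ∃ a b : Fin n,
    a.val < i.val ∧ b.val < i.val ∧ a ≠ b ∧ G.Adj a b ∧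
    ∀ j : Fin n, j.val < i.val → (G.Adj i j ↔ (j = a ∨ j = b)))

/-- A 2-tree: a graph obtained from the triangle `K₃` by repeatedly adding new
vertices, each joined to exactly the two endpoints of an existing edge
(up to isomorphism). -/
def IsTwoTree {V : Type*} (G : SimpleGraph V) : Prop :=
  ∃ (n : ℕ) (H : SimpleGraph (Fin n)), IsTwoTreeSeq H ∧ Nonempty (G ≃g H)

open SimpleGraph Finset

/-- Restricting a 2-tree sequence to the first `m` vertices gives a 2-tree sequence. -/
lemma comap_twoTreeSeq {m : ℕ} (H : SimpleGraph (Fin (m + 1))) (h : IsTwoTreeSeq H)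
    (hm : 3 ≤ m) : IsTwoTreeSeq (H.comap Fin.castSucc) := by
  obtain ⟨-, htri, hstep⟩ := h
  refine ⟨hm, ?_, ?_⟩
  · intro i j hi hj hij
    exact htri i.castSucc j.castSucc hi hj fun e => hij (Fin.castSucc_injective _ e)
  · intro i hi
    obtain ⟨a, b, ha, hb, hab, hadj, hspec⟩ := hstep i.castSucc hi
    refine ⟨⟨a.val, lt_trans ha i.isLt⟩, ⟨b.val, lt_trans hb i.isLt⟩, ha, hb, ?_, ?_, ?_⟩
    · intro e
      simp only [Fin.mk.injEq] at e
      exact hab (Fin.ext e)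
    · show H.Adj _ _
      convert hadj using 1 <;> exact Fin.ext rfl
    · intro j hj
      have hja : (⟨a.val, lt_trans ha i.isLt⟩ : Fin m).castSucc = a := Fin.ext rfl
      have hjb : (⟨b.val, lt_trans hb i.isLt⟩ : Fin m).castSucc = b := Fin.ext rfl
      rw [SimpleGraph.comap_adj, hspec j.castSucc hj]
      constructor
      · rintro (hc | hc)
        · exact Or.inl (Fin.castSucc_injective _ (by rw [hja, hc]))
        · exact Or.inr (Fin.castSucc_injective _ (by rw [hjb, hc]))
      · rintro (rfl | rfl)
        · exact Or.inl hja
        · exact Or.inr hjb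

/-- A vertex that dominates all others in index and is joined to exactly two
earlier vertices has degree two. -/
lemma degree_eq_two_of_top {n : ℕ} (H : SimpleGraph (Fin n)) [DecidableRel H.Adj]
    (i a b : Fin n) (htop : ∀ j : Fin n, j ≠ i → j.val < i.val)
    (ha : a.val < i.val) (hb : b.val < i.val) (hab : a ≠ b)
    (hspec : ∀ j : Fin n, j.val < i.val → (H.Adj i j ↔ (j = a ∨ j = b))) :
    H.degree i = 2 := by
  have hnb : H.neighborFinset i = {a, b} := by
    ext j
    rw [mem_neighborFinset, Finset.mem_insert, Finset.mem_singleton]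
    constructor
    · intro hj
      exact (hspec j (htop j fun e => H.irrefl (e ▸ hj))).mp hj
    · rintro (rfl | rfl)
      · exact (hspec j ha).mpr (Or.inl rfl)
      · exact (hspec j hb).mpr (Or.inr rfl)
  rw [← card_neighborFinset_eq_degree, hnb, Finset.card_pair hab]

/-- If a vertex is not adjacent to the last vertex, its degree in the restricted
graph equals its degree in the original graph. -/
lemma degree_comap_castSucc {m : ℕ} (H : SimpleGraph (Fin (m + 1))) [DecidableRel H.Adj]
    [DecidableRel (H.comap (Fin.castSucc : Fin m → Fin (m + 1))).Adj] (x : Fin m)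
    (hx : ¬ H.Adj (Fin.last m) x.castSucc) :
    H.degree x.castSucc = (H.comap Fin.castSucc).degree x := by
  rw [← card_neighborFinset_eq_degree, ← card_neighborFinset_eq_degree]
  have himg : H.neighborFinset x.castSucc
      = ((H.comap Fin.castSucc).neighborFinset x).image Fin.castSucc := by
    ext j
    simp only [mem_neighborFinset, Finset.mem_image, SimpleGraph.comap_adj]
    constructor
    · intro hj
      have hjne : j ≠ Fin.last m := by
        rintro rfl
        exact hx hj.symm
      have hjlt : j.val < m :=
        lt_of_le_of_ne (Nat.lt_succ_iff.mp j.isLt) fun e => hjne (Fin.ext e)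
      refine ⟨⟨j.val, hjlt⟩, ?_, Fin.ext rfl⟩
      have : (⟨j.val, hjlt⟩ : Fin m).castSucc = j := Fin.ext rfl
      rw [this]
      exact hj
    · rintro ⟨j', hj', rfl⟩
      exact hj'
  rw [himg, Finset.card_image_of_injective _ (Fin.castSucc_injective m)]

lemma seq_main : ∀ (n : ℕ), 4 ≤ n → ∀ (H : SimpleGraph (Fin n)),
    ∀ (_ : DecidableRel H.Adj), IsTwoTreeSeq H →
    ∃ x y : Fin n, x ≠ y ∧ ¬ H.Adj x y ∧ H.degree x = 2 ∧ H.degree y = 2 := by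
  intro n hn
  induction n, hn using Nat.le_induction with
  | base =>
    intro H inst h2t
    obtain ⟨-, htri, hstep⟩ := h2t
    obtain ⟨a, b, ha, hb, hab, hadjab, hspec⟩ := hstep 3 (by decide)
    have ha3 : a.val < 3 := ha
    have hb3 : b.val < 3 := hb
    -- find the third triangle vertex
    have hthird : ∀ a b : Fin 4, a.val < 3 → b.val < 3 → a ≠ b →
        ∃ c : Fin 4, c.val < 3 ∧ c ≠ a ∧ c ≠ b := by decide
    obtain ⟨c, hc3, hca, hcb⟩ := hthird a b ha3 hb3 hab
    -- the two other triangle vertices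
    have hothers : ∀ c : Fin 4, c.val < 3 → ∃ u w : Fin 4, u.val < 3 ∧ w.val < 3 ∧
        u ≠ w ∧ u ≠ c ∧ w ≠ c ∧ ∀ j : Fin 4, j.val < 3 → j ≠ c → (j = u ∨ j = w) := by
      decide
    obtain ⟨u, w, hu3, hw3, huw, huc, hwc, henum⟩ := hothers c hc3
    have hc3ne : c ≠ 3 := by
      intro e
      rw [e] at hc3
      exact absurd hc3 (by decide)
    have hcnadj : ¬ H.Adj 3 c := by
      intro hadj
      rcases (hspec c hc3).mp hadj with rfl | rfl
      · exact hca rfl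
      · exact hcb rfl
    refine ⟨c, 3, hc3ne, fun hadj => hcnadj hadj.symm, ?_, ?_⟩
    · -- degree of c is 2
      have hnb : H.neighborFinset c = {u, w} := by
        ext j
        rw [mem_neighborFinset, Finset.mem_insert, Finset.mem_singleton]
        constructor
        · intro hj
          have hjc : j ≠ c := fun e => H.irrefl (e ▸ hj)
          by_cases hj3 : j.val < 3
          · exact henum j hj3 hjc
          · have : j = 3 := by
              have := j.isLt
              apply Fin.ext
              omega
            exact absurd (this ▸ hj.symm) hcnadj
        · rintro (rfl | rfl)
          · exact (htri c j hc3 hu3 (Ne.symm huc)).symm.symm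
          · exact (htri c j hc3 hw3 (Ne.symm hwc)).symm.symm
      rw [← card_neighborFinset_eq_degree, hnb, Finset.card_pair huw]
    · -- degree of 3 is 2
      refine degree_eq_two_of_top H 3 a b ?_ ha hb hab hspec
      intro j hj
      have := j.isLt
      have : j.val ≠ 3 := fun e => hj (Fin.ext e)
      omega
  | succ n hn IH =>
    intro H inst h2t
    haveI instC : DecidableRel (H.comap (Fin.castSucc : Fin n → Fin (n + 1))).Adj :=
      fun a b => inst _ _
    have h2t' : IsTwoTreeSeq (H.comap Fin.castSucc) := comap_twoTreeSeq H h2t (by omega)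
    obtain ⟨x, y, hxy, hnadj, hdx, hdy⟩ := IH (H.comap Fin.castSucc) instC h2t'
    obtain ⟨-, -, hstep⟩ := h2t
    have hlastval : 3 ≤ (Fin.last n).val := by
      simp [Fin.val_last]; omega
    obtain ⟨a, b, ha, hb, hab, hadjab, hspec⟩ := hstep (Fin.last n) hlastval
    -- at most one of x, y is a parent of the last vertex
    have key : (x.castSucc ≠ a ∧ x.castSucc ≠ b) ∨ (y.castSucc ≠ a ∧ y.castSucc ≠ b) := by
      by_contra hcon
      push_neg at hcon
      obtain ⟨hx', hy'⟩ := hcon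
      rcases Classical.em (x.castSucc = a) with hxa | hxa
      · rcases Classical.em (y.castSucc = a) with hya | hya
        · exact hxy (Fin.castSucc_injective _ (hxa.trans hya.symm))
        · have hyb := hy' hya
          exact hnadj (by rw [SimpleGraph.comap_adj, hxa, hyb]; exact hadjab)
      · have hxb := hx' hxa
        rcases Classical.em (y.castSucc = b) with hyb | hyb
        · exact hxy (Fin.castSucc_injective _ (hxb.trans hyb.symm))
        · have hya : y.castSucc = a := by
            rcases Classical.em (y.castSucc = a) with h | h
            · exact h
            · exact absurd (hy' h) hyb
          exact hnadj (by rw [SimpleGraph.comap_adj, hxb, hya]; exact hadjab.symm)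
    obtain ⟨z, hdz, hza, hzb⟩ : ∃ z : Fin n, (H.comap Fin.castSucc).degree z = 2 ∧
        z.castSucc ≠ a ∧ z.castSucc ≠ b := by
      rcases key with ⟨h1, h2⟩ | ⟨h1, h2⟩
      · exact ⟨x, hdx, h1, h2⟩
      · exact ⟨y, hdy, h1, h2⟩
    have hznadj : ¬ H.Adj (Fin.last n) z.castSucc := by
      intro hadj
      rcases (hspec z.castSucc (by simpa using z.isLt)).mp hadj with h | h
      · exact hza h
      · exact hzb h
    have hdeg_z : H.degree z.castSucc = 2 := by
      rw [degree_comap_castSucc H z hznadj]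
      exact hdz
    have hdeg_last : H.degree (Fin.last n) = 2 := by
      refine degree_eq_two_of_top H (Fin.last n) a b ?_ ha hb hab hspec
      intro j hj
      have h1 := j.isLt
      have h2 : j.val ≠ n := fun e => hj (Fin.ext (by simpa using e))
      simpa using by omega
    refine ⟨z.castSucc, Fin.last n, ?_, ?_, hdeg_z, hdeg_last⟩
    · intro e
      have := z.isLt
      have : z.val = n := by
        have := congrArg Fin.val e
        simpa using this
      omega
    · intro hadj
      exact hznadj hadj.symm

/-- Every 2-tree with more than three vertices contains two non-adjacent
vertices each of degree two. -/
theorem twoTree_two_nonadjacent_degree_two (V : Type*) [Fintype V]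
    (G : SimpleGraph V) [DecidableRel G.Adj] (hG : IsTwoTree G)
    (hcard : 3 < Fintype.card V) :
    ∃ x y : V, x ≠ y ∧ ¬ G.Adj x y ∧ G.degree x = 2 ∧ G.degree y = 2 := by
  obtain ⟨n, H, hseq, ⟨e⟩⟩ := hG
  haveI : DecidableRel H.Adj := Classical.decRel _
  have hcn : Fintype.card V = n := by
    rw [Fintype.card_congr e.toEquiv, Fintype.card_fin]
  obtain ⟨x, y, hxy, hna, hdx, hdy⟩ := seq_main n (by omega) H inferInstance hseq
  refine ⟨e.symm x, e.symm y, ?_, ?_, ?_, ?_⟩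
  · intro h
    exact hxy (e.symm.injective h)
  · intro h
    exact hna (e.symm.map_adj_iff.mp h)
  · rw [← card_neighborSet_eq_degree, ← hdx, ← card_neighborSet_eq_degree]
    exact Fintype.card_congr (e.symm.mapNeighborSet x).symm
  · rw [← card_neighborSet_eq_degree, ← hdy, ← card_neighborSet_eq_degree]
    exact Fintype.card_congr (e.symm.mapNeighborSet y).symm
end

section
/- Let G be a connected simple graph and let x be a vertex of G of degree two whose two neighbors are adjacent to each other. Then for all vertices y, z of G distinct from x, the distance between y and z in the graph G − x (obtained by deleting x) equals their distance in G; moreover, if W is a resolving set for G with x ∉ W, then W is a resolving set for G − x. -/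
lemma walk_avoid {V : Type*} {G : SimpleGraph V} {x u v : V}
    (hnbr : ∀ w : V, G.Adj x w → w = u ∨ w = v) (hadj : G.Adj u v) :
    ∀ (n : ℕ) {y z : V} (p : G.Walk y z), p.length ≤ n → (hy : y ≠ x) → (hz : z ≠ x) →
      ∃ q : (G.induce {w : V | w ≠ x}).Walk ⟨y, hy⟩ ⟨z, hz⟩, q.length ≤ p.length := by
  intro n
  induction n with
  | zero =>
    intro y z p hp hy hz
    cases p with
    | nil => exact ⟨SimpleGraph.Walk.nil, by simp⟩
    | cons h q => simp [SimpleGraph.Walk.length_cons] at hp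
  | succ n ih =>
    intro y z p hp hy hz
    cases p with
    | nil => exact ⟨SimpleGraph.Walk.nil, by simp⟩
    | @cons _ w _ h q =>
      by_cases hw : w = x
      · cases q with
        | nil => exact absurd hw hz
        | @cons _ w2 _ h2 q2 =>
          have h2' : G.Adj x w2 := hw ▸ h2
          have h' : G.Adj y x := hw ▸ h
          have hw2x : w2 ≠ x := h2'.ne'
          simp only [SimpleGraph.Walk.length_cons] at hp ⊢
          by_cases hyw2 : y = w2
          · subst hyw2
            obtain ⟨q', hq'⟩ := ih q2 (by omega) hy hz
            exact ⟨q', by omega⟩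
          · have hadjyw2 : G.Adj y w2 := by
              rcases hnbr y h'.symm with h1 | h1 <;> rcases hnbr w2 h2' with h3 | h3 <;>
                subst h1 <;> subst h3
              · exact absurd rfl hyw2
              · exact hadj
              · exact hadj.symm
              · exact absurd rfl hyw2
            obtain ⟨q', hq'⟩ := ih q2 (by omega) hw2x hz
            refine ⟨SimpleGraph.Walk.cons ?_ q', ?_⟩
            · exact hadjyw2
            · show q'.length + 1 ≤ _; omega
      · simp only [SimpleGraph.Walk.length_cons] at hp ⊢
        obtain ⟨q', hq'⟩ := ih q (by omega) hw hz
        refine ⟨SimpleGraph.Walk.cons ?_ q', ?_⟩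
        · exact h
        · show q'.length + 1 ≤ _; omega

/-- Let `G` be a connected simple graph and `x` a vertex of degree two whose
two neighbours `u` and `v` are adjacent to each other.  Then deleting `x`
preserves all distances between the remaining vertices; moreover every
resolving set of `G` avoiding `x` is a resolving set of `G - x`. -/
theorem dist_delete_degree_two_vertex (V : Type*) (G : SimpleGraph V)
    (hconn : G.Connected) (x u v : V)
    (hxu : G.Adj x u) (hxv : G.Adj x v) (huv : u ≠ v)
    (hnbr : ∀ w : V, G.Adj x w → w = u ∨ w = v) (hadj : G.Adj u v) :
    (∀ y z : ↥{w : V | w ≠ x},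
      (G.induce {w : V | w ≠ x}).dist y z = G.dist y.1 z.1) ∧
    (∀ W : Set V, x ∉ W → IsResolvingSet G W →
      IsResolvingSet (G.induce {w : V | w ≠ x}) (Subtype.val ⁻¹' W)) := by
  have hdist : ∀ y z : ↥{w : V | w ≠ x},
      (G.induce {w : V | w ≠ x}).dist y z = G.dist y.1 z.1 := by
    intro y z
    obtain ⟨p, hp⟩ := hconn.exists_walk_length_eq_dist y.1 z.1
    obtain ⟨q, hq⟩ := walk_avoid hnbr hadj p.length p le_rfl y.2 z.2
    have h1 : (G.induce {w : V | w ≠ x}).dist y z ≤ G.dist y.1 z.1 := by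
      calc (G.induce {w : V | w ≠ x}).dist y z ≤ q.length := by
            have := SimpleGraph.dist_le q
            simpa using this
        _ ≤ p.length := hq
        _ = G.dist y.1 z.1 := hp
    have h2 : G.dist y.1 z.1 ≤ (G.induce {w : V | w ≠ x}).dist y z := by
      have hr : (G.induce {w : V | w ≠ x}).Reachable y z := ⟨q⟩
      obtain ⟨r, hr'⟩ := hr.exists_walk_length_eq_dist
      have := SimpleGraph.dist_le
        (r.map (SimpleGraph.Embedding.induce {w : V | w ≠ x}).toHom)
      exact le_trans this (le_of_eq ((SimpleGraph.Walk.length_map _ _).trans hr'))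
    omega
  refine ⟨hdist, ?_⟩
  intro W hxW hres a b hab
  obtain ⟨w, hwW, hw⟩ := hres a.1 b.1 (fun h => hab (Subtype.ext h))
  have hwx : w ≠ x := fun h => hxW (h ▸ hwW)
  refine ⟨⟨w, hwx⟩, hwW, ?_⟩
  rw [hdist a ⟨w, hwx⟩, hdist b ⟨w, hwx⟩]
  exact hw
end

section
/- Let G be a connected simple graph, let u, v be vertices of G, and let H be a set of vertices of G containing u and v such that every vertex of H \ {u, v} has all of its neighbors inside H. Then for every vertex x ∈ H and every vertex a ∉ H \ {u, v}, the distance satisfies d(x, a) = min( d(x,u) + d(u,a), d(x,v) + d(v,a) ). -/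
open SimpleGraph

lemma walk_hits_branch {V : Type*} {G : SimpleGraph V} {u v : V} {H : Set V}
    (hclosed : ∀ w ∈ H, w ≠ u → w ≠ v → ∀ z : V, G.Adj w z → z ∈ H) :
    ∀ {x b : V} (p : G.Walk x b), x ∈ H → b ∉ H \ {u, v} →
      u ∈ p.support ∨ v ∈ p.support := by
  intro x b p
  induction p with
  | nil =>
    intro hx hb
    simp only [Set.mem_diff, Set.mem_insert_iff, Set.mem_singleton_iff, not_and,
      not_not] at hb
    rcases hb hx with h | h <;> simp [h]
  | @cons x y b hadj q ih =>
    intro hx hb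
    by_cases hxu : x = u
    · left; simp [hxu]
    by_cases hxv : x = v
    · right; simp [hxv]
    have hy : y ∈ H := hclosed x hx hxu hxv y hadj
    rcases ih hy hb with h | h
    · left; simp [SimpleGraph.Walk.support_cons, h]
    · right; simp [SimpleGraph.Walk.support_cons, h]

/-- Let `G` be a connected simple graph, `u, v` vertices, and `H` a set of
vertices containing `u` and `v` such that every vertex of `H \ {u, v}` has all
of its neighbours inside `H`.  Then for every `x ∈ H` and every `a ∉ H \ {u, v}`,
`d(x, a) = min (d(x,u) + d(u,a)) (d(x,v) + d(v,a))`. -/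
theorem dist_through_branch (V : Type*) (G : SimpleGraph V) (hconn : G.Connected)
    (u v : V) (H : Set V) (hu : u ∈ H) (hv : v ∈ H)
    (hclosed : ∀ w ∈ H, w ≠ u → w ≠ v → ∀ z : V, G.Adj w z → z ∈ H)
    (x : V) (hx : x ∈ H) (a : V) (ha : a ∉ H \ {u, v}) :
    G.dist x a = min (G.dist x u + G.dist u a) (G.dist x v + G.dist v a) := by
  classical
  apply le_antisymm
  · exact le_min (hconn.dist_triangle) (hconn.dist_triangle)
  · obtain ⟨p, hp⟩ := hconn.exists_walk_length_eq_dist x a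
    rcases walk_hits_branch hclosed p hx ha with h | h
    · refine le_trans (min_le_left _ _) ?_
      have hsplit := p.take_spec h
      calc G.dist x u + G.dist u a
          ≤ (p.takeUntil u h).length + (p.dropUntil u h).length :=
            Nat.add_le_add (SimpleGraph.dist_le _) (SimpleGraph.dist_le _)
        _ = p.length := by
            rw [← SimpleGraph.Walk.length_append, hsplit]
        _ = G.dist x a := hp
    · refine le_trans (min_le_right _ _) ?_
      have hsplit := p.take_spec h
      calc G.dist x v + G.dist v a
          ≤ (p.takeUntil v h).length + (p.dropUntil v h).length :=
            Nat.add_le_add (SimpleGraph.dist_le _) (SimpleGraph.dist_le _)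
        _ = p.length := by
            rw [← SimpleGraph.Walk.length_append, hsplit]
        _ = G.dist x a := hp
end

section
/- Let G be a connected simple graph, let u, v be vertices of G, and let H be a set of vertices of G containing u and v such that every vertex of H \ {u, v} has all of its neighbors inside H. If W is a resolving set for G with W ∩ H ⊆ {u, v}, then {u, v} resolves H: for every pair of distinct vertices x, y ∈ H, either d(x,u) ≠ d(y,u) or d(x,v) ≠ d(y,v). -/
/-- Any walk from a vertex of `H` to a vertex outside `H` passes through `u` or `v`. -/
lemma walk_exits_through {V : Type*} {G : SimpleGraph V} {u v : V} {H : Set V}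
    (hclosed : ∀ w ∈ H, w ≠ u → w ≠ v → ∀ z : V, G.Adj w z → z ∈ H)
    {x w : V} (p : G.Walk x w) (hx : x ∈ H) (hw : w ∉ H) :
    u ∈ p.support ∨ v ∈ p.support := by
  induction p with
  | nil => exact absurd hx hw
  | @cons a b c hab q ih =>
    by_cases hau : a = u
    · left; simp [hau]
    by_cases hav : a = v
    · right; simp [hav]
    · have hb : b ∈ H := hclosed a hx hau hav b hab
      rcases ih hb hw with h | h
      · left; simp [h]
      · right; simp [h]

/-- Let `G` be a connected simple graph, `u, v` vertices, and `H` a set of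
vertices containing `u` and `v` such that every vertex of `H \ {u, v}` has all
of its neighbours inside `H`.  If `W` is a resolving set for `G` with
`W ∩ H ⊆ {u, v}`, then `{u, v}` resolves `H`. -/
theorem branch_resolved_by_endpoints (V : Type*) (G : SimpleGraph V)
    (hconn : G.Connected) (u v : V) (H : Set V) (hu : u ∈ H) (hv : v ∈ H)
    (hclosed : ∀ w ∈ H, w ≠ u → w ≠ v → ∀ z : V, G.Adj w z → z ∈ H)
    (W : Set V) (hW : IsResolvingSet G W) (hWH : W ∩ H ⊆ {u, v}) :
    ∀ x ∈ H, ∀ y ∈ H, x ≠ y →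
      G.dist x u ≠ G.dist y u ∨ G.dist x v ≠ G.dist y v := by
  classical
  intro x hx y hy hxy
  by_contra hcon
  push_neg at hcon
  obtain ⟨hdu, hdv⟩ := hcon
  obtain ⟨w, hwW, hwd⟩ := hW x y hxy
  -- Key: d(·, w) is determined by d(·,u), d(·,v) for points of H when w ∉ H.
  have key : ∀ z ∈ H, (w ∉ H) →
      G.dist z w = min (G.dist z u + G.dist u w) (G.dist z v + G.dist v w) := by
    intro z hz hwH
    apply le_antisymm (le_min hconn.dist_triangle hconn.dist_triangle)
    -- take shortest walk, it passes through u or v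
    obtain ⟨p, hp⟩ := hconn.exists_walk_length_eq_dist z w
    rcases walk_exits_through hclosed p hz hwH with hm | hm
    · refine le_trans (min_le_left _ _) ?_
      calc G.dist z u + G.dist u w
          ≤ (p.takeUntil u hm).length + (p.dropUntil u hm).length :=
            Nat.add_le_add (SimpleGraph.dist_le _) (SimpleGraph.dist_le _)
        _ = p.length := by
            rw [← SimpleGraph.Walk.length_append, SimpleGraph.Walk.take_spec]
        _ = G.dist z w := hp
    · refine le_trans (min_le_right _ _) ?_
      calc G.dist z v + G.dist v w
          ≤ (p.takeUntil v hm).length + (p.dropUntil v hm).length :=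
            Nat.add_le_add (SimpleGraph.dist_le _) (SimpleGraph.dist_le _)
        _ = p.length := by
            rw [← SimpleGraph.Walk.length_append, SimpleGraph.Walk.take_spec]
        _ = G.dist z w := hp
  apply hwd
  by_cases hwH : w ∈ H
  · have : w ∈ ({u, v} : Set V) := hWH ⟨hwW, hwH⟩
    rcases this with rfl | rfl
    · exact hdu
    · exact hdv
  · rw [key x hx hwH, key y hy hwH, hdu, hdv]
end

section
/- For every integer n ≥ 4, let C(n) be the cane obtained from the 2-path P(n,2) by adding one new vertex x adjacent exactly to v_1 and v_3. Then {v_1, v_2} is a resolving set for C(n), and the metric dimension of C(n) equals two. -/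
/-- The cane `C(n)` (for `n ≥ 4`): the `2`-path `P(n,2)` on vertices
`v_1, …, v_n` (indices `0, …, n-1`, distinct vertices adjacent iff their
indices differ by at most `2`) together with one extra vertex (index `n`)
adjacent exactly to `v_1` and `v_3` (indices `0` and `2`). -/
def caneGraph (n : ℕ) : SimpleGraph (Fin (n + 1)) :=
  SimpleGraph.fromRel (fun i j =>
    (i.val < n ∧ j.val < n ∧ |(i.val : ℤ) - j.val| ≤ 2) ∨
    (i.val = n ∧ (j.val = 0 ∨ j.val = 2)))

lemma cane_adj {n : ℕ} {a b : Fin (n+1)} :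
    (caneGraph n).Adj a b ↔ a ≠ b ∧
      ((a.val < n ∧ b.val < n ∧ |(a.val : ℤ) - b.val| ≤ 2) ∨
       (a.val = n ∧ (b.val = 0 ∨ b.val = 2)) ∨
       (b.val = n ∧ (a.val = 0 ∨ a.val = 2))) := by
  have habs : |(b.val : ℤ) - a.val| = |(a.val : ℤ) - b.val| := abs_sub_comm _ _
  rw [caneGraph, SimpleGraph.fromRel_adj, habs]
  tauto

lemma cane_adj' {n : ℕ} {a b : Fin (n+1)} (hab : a ≠ b)
    (h : (a.val < n ∧ b.val < n ∧ a.val ≤ b.val + 2 ∧ b.val ≤ a.val + 2) ∨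
       (a.val = n ∧ (b.val = 0 ∨ b.val = 2)) ∨
       (b.val = n ∧ (a.val = 0 ∨ a.val = 2))) : (caneGraph n).Adj a b := by
  rw [cane_adj]
  refine ⟨hab, ?_⟩
  rcases h with ⟨h1, h2, h3⟩ | h | h
  · exact Or.inl ⟨h1, h2, by rw [abs_le]; omega⟩
  · tauto
  · tauto

open SimpleGraph in
lemma walk_potential {V : Type*} {G : SimpleGraph V} (f : V → ℤ)
    (hf : ∀ a b, G.Adj a b → |f a - f b| ≤ 1) {u v : V} (p : G.Walk u v) :
    |f u - f v| ≤ (p.length : ℤ) := by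
  induction p with
  | nil => simp
  | @cons a b c h p ih =>
    have h1 := hf _ _ h
    have := abs_sub_le (f a) (f b) (f c)
    simp only [SimpleGraph.Walk.length_cons]
    push_cast
    omega

open SimpleGraph in
lemma dist_ge_potential {V : Type*} {G : SimpleGraph V} (f : V → ℤ)
    (hf : ∀ a b, G.Adj a b → |f a - f b| ≤ 1) {u v : V} (h : G.Reachable u v) :
    |f u - f v| ≤ (G.dist u v : ℤ) := by
  obtain ⟨p, hp⟩ := h.exists_walk_length_eq_dist
  simpa [hp] using walk_potential f hf p

lemma cane_zero_lt {n : ℕ} (hn : 4 ≤ n) : 0 < n + 1 := by omega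

lemma cane_one_lt {n : ℕ} (hn : 4 ≤ n) : 1 < n + 1 := by omega

lemma cane_reach0 {n : ℕ} (hn : 4 ≤ n) (v : Fin (n+1)) :
    (caneGraph n).Reachable ⟨0, cane_zero_lt hn⟩ v := by
  rcases eq_or_lt_of_le (Nat.lt_succ_iff.mp v.isLt) with h | h
  · -- v = extra vertex, adjacent to 0
    exact (SimpleGraph.Adj.reachable (by
      apply cane_adj' (by intro hc; rw [← hc] at h; simp at h; omega)
      right; right; exact ⟨h, Or.inl rfl⟩))
  · -- v.val < n : induct
    obtain ⟨i, hi⟩ : ∃ i, i = v.val := ⟨v.val, rfl⟩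
    induction i using Nat.strong_induction_on generalizing v with
    | _ i ih =>
      rcases Nat.eq_zero_or_pos i with h0 | h0
      · have : v = ⟨0, by omega⟩ := by apply Fin.ext; simp only [Fin.val_mk]; omega
        rw [this]
      · have hadj : (caneGraph n).Adj ⟨i - 1, by omega⟩ v := by
          apply cane_adj' (by apply Fin.ne_of_val_ne; simp only [Fin.val_mk]; omega)
          left; simp; omega
        exact (ih (i-1) (by omega) ⟨i-1, by omega⟩ (by simpa using by omega) rfl).trans
          hadj.reachable

lemma cane_connected {n : ℕ} (hn : 4 ≤ n) : (caneGraph n).Connected := by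
  rw [SimpleGraph.connected_iff]
  exact ⟨fun u v => (cane_reach0 hn u).symm.trans (cane_reach0 hn v), ⟨⟨0, by omega⟩⟩⟩

/-- value of dist to vertex 0 -/
def d0 (n : ℕ) (v : Fin (n+1)) : ℕ := if v.val = n then 1 else (v.val + 1) / 2

/-- value of dist to vertex 1 -/
def d1 (n : ℕ) (v : Fin (n+1)) : ℕ :=
  if v.val = n then 2 else if v.val = 0 then 1 else v.val / 2

lemma f0_lip {n : ℕ} (hn : 4 ≤ n) {a b : Fin (n+1)} (h : (caneGraph n).Adj a b) :
    |(d0 n a : ℤ) - d0 n b| ≤ 1 := by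
  rw [cane_adj] at h
  obtain ⟨hne, h⟩ := h
  unfold d0
  rcases h with ⟨h1, h2, h3⟩ | ⟨h1, h2 | h2⟩ | ⟨h1, h2 | h2⟩ <;>
    rw [abs_le] at * <;> split_ifs <;> omega

lemma f1_lip {n : ℕ} (hn : 4 ≤ n) {a b : Fin (n+1)} (h : (caneGraph n).Adj a b) :
    |(d1 n a : ℤ) - d1 n b| ≤ 1 := by
  rw [cane_adj] at h
  obtain ⟨hne, h⟩ := h
  unfold d1
  rcases h with ⟨h1, h2, h3⟩ | ⟨h1, h2 | h2⟩ | ⟨h1, h2 | h2⟩ <;>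
    rw [abs_le] at * <;> split_ifs <;> omega

lemma dist0_le {n : ℕ} (hn : 4 ≤ n) : ∀ i, (h : i < n) →
    (caneGraph n).dist ⟨i, by omega⟩ ⟨0, by omega⟩ ≤ (i + 1) / 2 := by
  intro i
  induction i using Nat.strong_induction_on with
  | _ i ih =>
    intro hi
    rcases Nat.lt_or_ge i 2 with h2 | h2
    · interval_cases i
      · simp [SimpleGraph.dist_self]
      · rw [show ((1:ℕ)+1)/2 = 1 by norm_num]
        exact le_of_eq <| SimpleGraph.dist_eq_one_iff_adj.mpr <| cane_adj' (by apply Fin.ne_of_val_ne; simp) (by left; simp; omega)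
    · have hadj : (caneGraph n).Adj ⟨i, by omega⟩ ⟨i - 2, by omega⟩ :=
        cane_adj' (by apply Fin.ne_of_val_ne; simp only [Fin.val_mk]; omega) (by left; simp; omega)
      calc (caneGraph n).dist ⟨i, by omega⟩ ⟨0, by omega⟩
          ≤ (caneGraph n).dist ⟨i, by omega⟩ ⟨i - 2, by omega⟩ +
            (caneGraph n).dist ⟨i - 2, by omega⟩ ⟨0, by omega⟩ :=
            (cane_connected hn).dist_triangle
        _ ≤ 1 + (i - 2 + 1) / 2 := by
            gcongr
            · exact le_of_eq (SimpleGraph.dist_eq_one_iff_adj.mpr hadj)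
            · exact ih (i - 2) (by omega) (by omega)
        _ ≤ (i + 1) / 2 := by omega

lemma dist0_eq {n : ℕ} (hn : 4 ≤ n) (v : Fin (n+1)) :
    (caneGraph n).dist v ⟨0, cane_zero_lt hn⟩ = d0 n v := by
  apply le_antisymm
  · rcases Nat.lt_or_ge v.val n with h | h
    · have : v = ⟨v.val, by omega⟩ := rfl
      rw [this, d0]
      simpa [Nat.ne_of_lt h] using dist0_le hn v.val h
    · have hv : v.val = n := by omega
      rw [d0, if_pos hv]
      exact le_of_eq <| SimpleGraph.dist_eq_one_iff_adj.mpr <| cane_adj' (by apply Fin.ne_of_val_ne; simp only [Fin.val_mk]; omega)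
        (by right; left; exact ⟨hv, Or.inl rfl⟩)
  · have h := dist_ge_potential (fun w => (d0 n w : ℤ))
      (fun a b hab => f0_lip hn hab) (cane_connected hn v ⟨0, by omega⟩)
    have h0 : d0 n (⟨0, by omega⟩ : Fin (n+1)) = 0 := by unfold d0; simp; omega
    simp only [h0, Nat.cast_zero, sub_zero, Nat.abs_cast] at h
    exact_mod_cast h

lemma dist1_le {n : ℕ} (hn : 4 ≤ n) : ∀ i, (h : i < n) →
    (caneGraph n).dist ⟨i, by omega⟩ ⟨1, by omega⟩ ≤ if i = 0 then 1 else i / 2 := by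
  intro i
  induction i using Nat.strong_induction_on with
  | _ i ih =>
    intro hi
    rcases Nat.lt_or_ge i 3 with h2 | h2
    · interval_cases i
      · simp only [if_pos rfl]
        exact le_of_eq <| SimpleGraph.dist_eq_one_iff_adj.mpr <| cane_adj'
          (by apply Fin.ne_of_val_ne; simp) (by left; simp; omega)
      · simp [SimpleGraph.dist_self]
      · simp only [if_neg (by norm_num : (2:ℕ) ≠ 0), show (2:ℕ)/2 = 1 by norm_num]
        exact le_of_eq <| SimpleGraph.dist_eq_one_iff_adj.mpr <| cane_adj'
          (by apply Fin.ne_of_val_ne; simp) (by left; simp; omega)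
    · have hadj : (caneGraph n).Adj ⟨i, by omega⟩ ⟨i - 2, by omega⟩ :=
        cane_adj' (by apply Fin.ne_of_val_ne; simp only [Fin.val_mk]; omega) (by left; simp; omega)
      have hih := ih (i - 2) (by omega) (by omega)
      rw [if_neg (by omega : ¬ i - 2 = 0)] at hih
      calc (caneGraph n).dist ⟨i, by omega⟩ ⟨1, by omega⟩
          ≤ (caneGraph n).dist ⟨i, by omega⟩ ⟨i - 2, by omega⟩ +
            (caneGraph n).dist ⟨i - 2, by omega⟩ ⟨1, by omega⟩ :=
            (cane_connected hn).dist_triangle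
        _ ≤ 1 + (i - 2) / 2 :=
            add_le_add (le_of_eq (SimpleGraph.dist_eq_one_iff_adj.mpr hadj)) hih
        _ ≤ if i = 0 then 1 else i / 2 := by rw [if_neg (by omega : ¬ i = 0)]; omega

lemma dist1_eq {n : ℕ} (hn : 4 ≤ n) (v : Fin (n+1)) :
    (caneGraph n).dist v ⟨1, cane_one_lt hn⟩ = d1 n v := by
  apply le_antisymm
  · rcases Nat.lt_or_ge v.val n with h | h
    · have : v = ⟨v.val, by omega⟩ := rfl
      rw [this, d1, if_neg (by omega : ¬ v.val = n)]
      exact dist1_le hn v.val h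
    · have hv : v.val = n := by omega
      rw [d1, if_pos hv]
      calc (caneGraph n).dist v ⟨1, by omega⟩
          ≤ (caneGraph n).dist v ⟨0, by omega⟩ +
            (caneGraph n).dist ⟨0, by omega⟩ ⟨1, by omega⟩ :=
            (cane_connected hn).dist_triangle
        _ ≤ 1 + 1 := by
            gcongr
            · exact le_of_eq <| SimpleGraph.dist_eq_one_iff_adj.mpr <| cane_adj'
                (by apply Fin.ne_of_val_ne; simp only [Fin.val_mk]; omega)
                (by right; left; exact ⟨hv, Or.inl rfl⟩)
            · exact le_of_eq <| SimpleGraph.dist_eq_one_iff_adj.mpr <| cane_adj'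
                (by apply Fin.ne_of_val_ne; simp) (by left; simp; omega)
        _ = 2 := rfl
  · have h := dist_ge_potential (fun w => (d1 n w : ℤ))
      (fun a b hab => f1_lip hn hab) (cane_connected hn v ⟨1, by omega⟩)
    have h0 : d1 n (⟨1, by omega⟩ : Fin (n+1)) = 0 := by unfold d1; simp; omega
    simp only [h0, Nat.cast_zero, sub_zero, Nat.abs_cast] at h
    exact_mod_cast h

lemma exists_adj_pair {n : ℕ} (hn : 4 ≤ n) (w : Fin (n+1)) :
    ∃ u v : Fin (n+1), u ≠ v ∧ (caneGraph n).Adj u w ∧ (caneGraph n).Adj v w := by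
  by_cases hw : w.val = n
  · refine ⟨⟨0, by omega⟩, ⟨2, by omega⟩, by apply Fin.ne_of_val_ne; simp, ?_, ?_⟩
    · exact cane_adj' (by apply Fin.ne_of_val_ne; simp only [Fin.val_mk]; omega)
        (by right; right; exact ⟨hw, Or.inl rfl⟩)
    · exact cane_adj' (by apply Fin.ne_of_val_ne; simp only [Fin.val_mk]; omega)
        (by right; right; exact ⟨hw, Or.inr rfl⟩)
  · have hwn : w.val < n := by omega
    by_cases hw0 : w.val = 0
    · refine ⟨⟨1, by omega⟩, ⟨2, by omega⟩, by apply Fin.ne_of_val_ne; simp, ?_, ?_⟩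
      · exact cane_adj' (by apply Fin.ne_of_val_ne; simp only [Fin.val_mk]; omega) (by left; simp; omega)
      · exact cane_adj' (by apply Fin.ne_of_val_ne; simp only [Fin.val_mk]; omega) (by left; simp; omega)
    · by_cases hw1 : w.val = n - 1
      · refine ⟨⟨n - 3, by omega⟩, ⟨n - 2, by omega⟩, by apply Fin.ne_of_val_ne; simp only [Fin.val_mk]; omega, ?_, ?_⟩
        · exact cane_adj' (by apply Fin.ne_of_val_ne; simp only [Fin.val_mk]; omega) (by left; simp; omega)
        · exact cane_adj' (by apply Fin.ne_of_val_ne; simp only [Fin.val_mk]; omega) (by left; simp; omega)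
      · refine ⟨⟨w.val - 1, by omega⟩, ⟨w.val + 1, by omega⟩, by apply Fin.ne_of_val_ne; simp only [Fin.val_mk]; omega, ?_, ?_⟩
        · exact cane_adj' (by apply Fin.ne_of_val_ne; simp only [Fin.val_mk]; omega) (by left; simp; omega)
        · exact cane_adj' (by apply Fin.ne_of_val_ne; simp only [Fin.val_mk]; omega) (by left; simp; omega)

/-- For every `n ≥ 4`, in the cane `C(n)`, the set `{v_1, v_2}` is a resolving
set, and the metric dimension of `C(n)` equals two. -/
theorem cane_resolving_and_metricDim (n : ℕ) (hn : 4 ≤ n) :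
    IsResolvingSet (caneGraph n)
      {(⟨0, by omega⟩ : Fin (n + 1)), (⟨1, by omega⟩ : Fin (n + 1))} ∧
    metricDim (caneGraph n) = 2 := by
  have hres : IsResolvingSet (caneGraph n)
      {(⟨0, by omega⟩ : Fin (n + 1)), (⟨1, by omega⟩ : Fin (n + 1))} := by
    intro u v huv
    by_contra hcon
    push_neg at hcon
    have h0 := hcon ⟨0, by omega⟩ (Set.mem_insert _ _)
    have h1 := hcon ⟨1, by omega⟩ (Set.mem_insert_iff.mpr (Or.inr rfl))
    rw [dist0_eq hn u, dist0_eq hn v] at h0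
    rw [dist1_eq hn u, dist1_eq hn v] at h1
    apply huv
    apply Fin.ext
    have hu := u.isLt
    have hv := v.isLt
    unfold d0 at h0
    unfold d1 at h1
    split_ifs at h0 h1 <;> omega
  refine ⟨hres, ?_⟩
  have hne01 : (⟨0, by omega⟩ : Fin (n+1)) ≠ ⟨1, by omega⟩ := by
    apply Fin.ne_of_val_ne; simp only [Fin.val_mk]; omega
  have h2mem : 2 ∈ {m | ∃ W : Finset (Fin (n+1)),
      IsResolvingSet (caneGraph n) ↑W ∧ W.card = m} := by
    refine ⟨{⟨0, by omega⟩, ⟨1, by omega⟩}, ?_, Finset.card_pair hne01⟩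
    simpa using hres
  unfold metricDim
  apply le_antisymm
  · exact Nat.sInf_le h2mem
  · apply le_csInf ⟨2, h2mem⟩
    rintro m ⟨W, hW, rfl⟩
    by_contra hlt
    push_neg at hlt
    have hcases : W.card = 0 ∨ W.card = 1 := by omega
    rcases hcases with hc | hc
    · rw [Finset.card_eq_zero] at hc
      subst hc
      obtain ⟨w, hw, _⟩ := hW ⟨0, by omega⟩ ⟨1, by omega⟩ hne01
      simp at hw
    · rw [Finset.card_eq_one] at hc
      obtain ⟨w, rfl⟩ := hc
      obtain ⟨u, v, huv, hu, hv⟩ := exists_adj_pair hn w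
      obtain ⟨x, hx, hne⟩ := hW u v huv
      simp only [Finset.coe_singleton, Set.mem_singleton_iff] at hx
      subst hx
      exact hne (by rw [SimpleGraph.dist_eq_one_iff_adj.mpr hu,
        SimpleGraph.dist_eq_one_iff_adj.mpr hv])
end

section
/- For integers k ≥ 3 and 2 ≤ m ≤ k − 1, let G(k,m) be the graph obtained by gluing two 2-paths along an edge: its vertices are a_1, …, a_k, b_1, …, b_k, and its edges are a_i a_{i+1} for 1 ≤ i ≤ k−1, b_i b_{i+1} for 1 ≤ i ≤ k−1, a_i b_i for 1 ≤ i ≤ k, b_i a_{i+1} for 1 ≤ i ≤ m−1, and a_i b_{i+1} for m ≤ i ≤ k−1. Then {a_1, a_k} is a resolving set for G(k,m), and the metric dimension of G(k,m) equals two. -/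
/-- The graph `G(k,m)` obtained by gluing two 2-paths along an edge.
Vertices are `a_1, …, a_k` (as `Sum.inl ⟨i-1⟩`) and `b_1, …, b_k`
(as `Sum.inr ⟨i-1⟩`).  Edges: `a_i a_{i+1}` and `b_i b_{i+1}` for
`1 ≤ i ≤ k-1`, `a_i b_i` for `1 ≤ i ≤ k`, `b_i a_{i+1}` for `1 ≤ i ≤ m-1`,
and `a_i b_{i+1}` for `m ≤ i ≤ k-1`. -/
def glueGraph (k m : ℕ) : SimpleGraph (Fin k ⊕ Fin k) :=
  SimpleGraph.fromRel (fun x y =>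
    match x, y with
    | Sum.inl i, Sum.inl j => j.val = i.val + 1
    | Sum.inr i, Sum.inr j => j.val = i.val + 1
    | Sum.inl i, Sum.inr j => i = j ∨ (j.val = i.val + 1 ∧ m ≤ i.val + 1)
    | Sum.inr i, Sum.inl j => j.val = i.val + 1 ∧ i.val + 1 ≤ m - 1)

namespace GlueAux

open SimpleGraph

variable {k m : ℕ}

/-! ### Adjacency lemmas -/

lemma adjAA (x : ℕ) (h1 : 1 ≤ x) (hx : x < k) :
    (glueGraph k m).Adj (Sum.inl ⟨x - 1, by omega⟩) (Sum.inl ⟨x, hx⟩) := by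
  rw [glueGraph, SimpleGraph.fromRel_adj]
  refine ⟨by simp [Fin.ext_iff]; omega, Or.inl ?_⟩
  simp; omega

lemma adjBB (x : ℕ) (h1 : 1 ≤ x) (hx : x < k) :
    (glueGraph k m).Adj (Sum.inr ⟨x - 1, by omega⟩) (Sum.inr ⟨x, hx⟩) := by
  rw [glueGraph, SimpleGraph.fromRel_adj]
  refine ⟨by simp [Fin.ext_iff]; omega, Or.inl ?_⟩
  simp; omega

lemma adjAB (x : ℕ) (hx : x < k) :
    (glueGraph k m).Adj (Sum.inl ⟨x, hx⟩) (Sum.inr ⟨x, hx⟩) := by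
  rw [glueGraph, SimpleGraph.fromRel_adj]
  exact ⟨by simp, Or.inl (Or.inl rfl)⟩

lemma adjAB2 (x : ℕ) (h1 : 1 ≤ x) (hx : x < k) (hm : m ≤ x) :
    (glueGraph k m).Adj (Sum.inl ⟨x - 1, by omega⟩) (Sum.inr ⟨x, hx⟩) := by
  rw [glueGraph, SimpleGraph.fromRel_adj]
  exact ⟨by simp, Or.inl (Or.inr ⟨show x = x - 1 + 1 by omega,
    show m ≤ x - 1 + 1 by omega⟩)⟩

lemma adjBA (x : ℕ) (h1 : 1 ≤ x) (hx : x < k) (hm : x ≤ m - 1) :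
    (glueGraph k m).Adj (Sum.inr ⟨x - 1, by omega⟩) (Sum.inl ⟨x, hx⟩) := by
  rw [glueGraph, SimpleGraph.fromRel_adj]
  exact ⟨by simp, Or.inl ⟨show x = x - 1 + 1 by omega,
    show x - 1 + 1 ≤ m - 1 by omega⟩⟩

/-! ### Walk segments along the two paths -/

lemma walkSegA (x : ℕ) (hx : x < k) : ∀ y, x ≤ y → ∀ hy : y < k,
    ∃ p : (glueGraph k m).Walk (Sum.inl ⟨x, hx⟩) (Sum.inl ⟨y, hy⟩), p.length = y - x := by
  intro y
  induction y with
  | zero =>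
    intro hxy hy
    have : x = 0 := by omega
    subst this
    exact ⟨SimpleGraph.Walk.nil, by simp⟩
  | succ n ih =>
    intro hxy hy
    rcases Nat.lt_or_ge x (n + 1) with h | h
    · obtain ⟨p, hp⟩ := ih (by omega) (by omega)
      refine ⟨p.concat (adjAA (n + 1) (by omega) hy), ?_⟩
      rw [SimpleGraph.Walk.length_concat, hp]; omega
    · have : x = n + 1 := by omega
      subst this
      exact ⟨SimpleGraph.Walk.nil, by simp⟩

lemma walkSegB (x : ℕ) (hx : x < k) : ∀ y, x ≤ y → ∀ hy : y < k,
    ∃ p : (glueGraph k m).Walk (Sum.inr ⟨x, hx⟩) (Sum.inr ⟨y, hy⟩), p.length = y - x := by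
  intro y
  induction y with
  | zero =>
    intro hxy hy
    have : x = 0 := by omega
    subst this
    exact ⟨SimpleGraph.Walk.nil, by simp⟩
  | succ n ih =>
    intro hxy hy
    rcases Nat.lt_or_ge x (n + 1) with h | h
    · obtain ⟨p, hp⟩ := ih (by omega) (by omega)
      refine ⟨p.concat (adjBB (n + 1) (by omega) hy), ?_⟩
      rw [SimpleGraph.Walk.length_concat, hp]; omega
    · have : x = n + 1 := by omega
      subst this
      exact ⟨SimpleGraph.Walk.nil, by simp⟩

/-! ### Potential functions for lower bounds -/

lemma walk_potential {V : Type*} {G : SimpleGraph V} (f : V → ℕ)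
    (hf : ∀ u v, G.Adj u v → f u ≤ f v + 2) {u v : V} (p : G.Walk u v) :
    f u ≤ f v + 2 * p.length := by
  induction p with
  | nil => simp
  | cons h p ih =>
    have := hf _ _ h
    rw [SimpleGraph.Walk.length_cons]
    omega

lemma dist_lower {V : Type*} {G : SimpleGraph V} (f : V → ℕ)
    (hf : ∀ u v, G.Adj u v → f u ≤ f v + 2) {u v : V} (hr : G.Reachable u v) :
    f u ≤ f v + 2 * G.dist u v := by
  obtain ⟨p, hp⟩ := hr.exists_walk_length_eq_dist
  rw [← hp]
  exact walk_potential f hf p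

def pot1 (k m : ℕ) : Fin k ⊕ Fin k → ℕ
  | Sum.inl x => 2 * x.val
  | Sum.inr y => if y.val < m then 2 * y.val + 1 else 2 * y.val

def pot2 (k m : ℕ) : Fin k ⊕ Fin k → ℕ
  | Sum.inl x => 2 * (k - 1 - x.val)
  | Sum.inr y => if y.val + 1 < m then 2 * (k - 1 - y.val) else 2 * (k - 1 - y.val) + 1

lemma pot1_lipschitz (hm2 : 2 ≤ m) : ∀ u v, (glueGraph k m).Adj u v →
    pot1 k m u ≤ pot1 k m v + 2 := by
  intro u v h
  rw [glueGraph, SimpleGraph.fromRel_adj] at h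
  obtain ⟨-, h⟩ := h
  rcases u with x | x <;> rcases v with y | y <;> simp only [pot1]
  · have h' : y.val = x.val + 1 ∨ x.val = y.val + 1 := h
    omega
  · have h' : (x = y ∨ (y.val = x.val + 1 ∧ m ≤ x.val + 1)) ∨
        (x.val = y.val + 1 ∧ y.val + 1 ≤ m - 1) := h
    have h'' : x.val = y.val ∨ (y.val = x.val + 1 ∧ m ≤ x.val + 1) ∨
        (x.val = y.val + 1 ∧ y.val + 1 ≤ m - 1) := by
      rcases h' with (h | h) | h
      · exact Or.inl (by rw [h])
      · exact Or.inr (Or.inl h)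
      · exact Or.inr (Or.inr h)
    split_ifs <;> omega
  · have h' : (y.val = x.val + 1 ∧ x.val + 1 ≤ m - 1) ∨
        (y = x ∨ (x.val = y.val + 1 ∧ m ≤ y.val + 1)) := h
    have h'' : x.val = y.val ∨ (y.val = x.val + 1 ∧ x.val + 1 ≤ m - 1) ∨
        (x.val = y.val + 1 ∧ m ≤ y.val + 1) := by
      rcases h' with h | (h | h)
      · exact Or.inr (Or.inl h)
      · exact Or.inl (by rw [h])
      · exact Or.inr (Or.inr h)
    split_ifs <;> omega
  · have h' : y.val = x.val + 1 ∨ x.val = y.val + 1 := h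
    split_ifs <;> omega

lemma pot2_lipschitz (hm2 : 2 ≤ m) (hmk : m ≤ k - 1) : ∀ u v, (glueGraph k m).Adj u v →
    pot2 k m u ≤ pot2 k m v + 2 := by
  intro u v h
  rw [glueGraph, SimpleGraph.fromRel_adj] at h
  obtain ⟨-, h⟩ := h
  rcases u with x | x <;> rcases v with y | y <;>
    have hx := x.isLt <;> have hy := y.isLt <;> simp only [pot2]
  · have h' : y.val = x.val + 1 ∨ x.val = y.val + 1 := h
    omega
  · have h' : (x = y ∨ (y.val = x.val + 1 ∧ m ≤ x.val + 1)) ∨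
        (x.val = y.val + 1 ∧ y.val + 1 ≤ m - 1) := h
    have h'' : x.val = y.val ∨ (y.val = x.val + 1 ∧ m ≤ x.val + 1) ∨
        (x.val = y.val + 1 ∧ y.val + 1 ≤ m - 1) := by
      rcases h' with (h | h) | h
      · exact Or.inl (by rw [h])
      · exact Or.inr (Or.inl h)
      · exact Or.inr (Or.inr h)
    split_ifs <;> omega
  · have h' : (y.val = x.val + 1 ∧ x.val + 1 ≤ m - 1) ∨
        (y = x ∨ (x.val = y.val + 1 ∧ m ≤ y.val + 1)) := h
    have h'' : x.val = y.val ∨ (y.val = x.val + 1 ∧ x.val + 1 ≤ m - 1) ∨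
        (x.val = y.val + 1 ∧ m ≤ y.val + 1) := by
      rcases h' with h | (h | h)
      · exact Or.inr (Or.inl h)
      · exact Or.inl (by rw [h])
      · exact Or.inr (Or.inr h)
    split_ifs <;> omega
  · have h' : y.val = x.val + 1 ∨ x.val = y.val + 1 := h
    split_ifs <;> omega

/-! ### Exact distances from `a 1` -/

lemma kpos (hk : 3 ≤ k) : 0 < k := by omega

lemma klt (hk : 3 ≤ k) : k - 1 < k := by omega

lemma dist1_a (hk : 3 ≤ k) (x : Fin k) (hm2 : 2 ≤ m) :
    (glueGraph k m).dist (Sum.inl (⟨0, kpos hk⟩ : Fin k)) (Sum.inl x) = x.val := by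
  obtain ⟨p, hp⟩ := walkSegA (k := k) (m := m) 0 (kpos hk) x.val (by omega) x.isLt
  refine le_antisymm ?_ ?_
  · calc (glueGraph k m).dist _ _ ≤ p.length := SimpleGraph.dist_le p
      _ = x.val := by rw [hp]; omega
  · have hr : (glueGraph k m).Reachable (Sum.inl ⟨0, kpos hk⟩) (Sum.inl x) := ⟨p⟩
    have := dist_lower (pot1 k m) (pot1_lipschitz hm2) hr.symm
    rw [SimpleGraph.dist_comm] at this
    simp only [pot1] at this
    omega

lemma dist1_b (hk : 3 ≤ k) (y : Fin k) (hm2 : 2 ≤ m) (hmk : m ≤ k - 1) :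
    (glueGraph k m).dist (Sum.inl (⟨0, kpos hk⟩ : Fin k)) (Sum.inr y)
      = if y.val < m then y.val + 1 else y.val := by
  have hy := y.isLt
  have key : ∃ p : (glueGraph k m).Walk (Sum.inl ⟨0, kpos hk⟩) (Sum.inr y),
      p.length = if y.val < m then y.val + 1 else y.val := by
    rcases Nat.lt_or_ge y.val m with h | h
    · obtain ⟨p, hp⟩ := walkSegA (k := k) (m := m) 0 (kpos hk) y.val (by omega) hy
      refine ⟨(p.concat (adjAB y.val hy)).copy rfl (by simp), ?_⟩
      simp [hp, h]
    · have h1 : 1 ≤ y.val := by omega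
      obtain ⟨p, hp⟩ := walkSegA (k := k) (m := m) 0 (kpos hk) (y.val - 1) (by omega) (by omega)
      refine ⟨(p.concat (adjAB2 y.val h1 hy h)).copy rfl (by simp), ?_⟩
      simp [hp, Nat.not_lt.mpr h]; omega
  obtain ⟨p, hp⟩ := key
  refine le_antisymm ?_ ?_
  · calc (glueGraph k m).dist _ _ ≤ p.length := SimpleGraph.dist_le p
      _ = _ := hp
  · have hr : (glueGraph k m).Reachable (Sum.inl ⟨0, kpos hk⟩) (Sum.inr y) := ⟨p⟩
    have := dist_lower (pot1 k m) (pot1_lipschitz hm2) hr.symm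
    rw [SimpleGraph.dist_comm] at this
    simp only [pot1] at this
    split_ifs at this ⊢ <;> omega

/-! ### Exact distances from `a k` -/

lemma dist2_a (hk : 3 ≤ k) (x : Fin k) (hm2 : 2 ≤ m) (hmk : m ≤ k - 1) :
    (glueGraph k m).dist (Sum.inl (⟨k - 1, klt hk⟩ : Fin k)) (Sum.inl x)
      = k - 1 - x.val := by
  obtain ⟨p, hp⟩ := walkSegA (k := k) (m := m) x.val x.isLt (k - 1) (by omega) (klt hk)
  refine le_antisymm ?_ ?_
  · calc (glueGraph k m).dist _ _ ≤ p.reverse.length := SimpleGraph.dist_le p.reverse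
      _ = k - 1 - x.val := by simp [hp]
  · have hr : (glueGraph k m).Reachable (Sum.inl ⟨k - 1, klt hk⟩) (Sum.inl x) :=
      ⟨p.reverse⟩
    have := dist_lower (pot2 k m) (pot2_lipschitz hm2 hmk) hr.symm
    rw [SimpleGraph.dist_comm] at this
    simp only [pot2] at this
    omega

lemma dist2_b (hk : 3 ≤ k) (y : Fin k) (hm2 : 2 ≤ m) (hmk : m ≤ k - 1) :
    (glueGraph k m).dist (Sum.inl (⟨k - 1, klt hk⟩ : Fin k)) (Sum.inr y)
      = if y.val + 1 < m then k - 1 - y.val else k - y.val := by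
  have hy := y.isLt
  have key : ∃ p : (glueGraph k m).Walk (Sum.inr y) (Sum.inl ⟨k - 1, klt hk⟩),
      p.length = if y.val + 1 < m then k - 1 - y.val else k - y.val := by
    rcases Nat.lt_or_ge (y.val + 1) m with h | h
    · -- use edge b_y a_{y+1} then walk along a's
      have hy1 : y.val + 1 < k := by omega
      obtain ⟨p, hp⟩ := walkSegA (k := k) (m := m) (y.val + 1) hy1 (k - 1) (by omega) (klt hk)
      have hadj : (glueGraph k m).Adj (Sum.inr y) (Sum.inl ⟨y.val + 1, hy1⟩) := by
        have := adjBA (k := k) (m := m) (y.val + 1) (by omega) hy1 (by omega)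
        simpa using this
      refine ⟨SimpleGraph.Walk.cons hadj p, ?_⟩
      rw [SimpleGraph.Walk.length_cons, hp, if_pos h]; omega
    · -- use edge b_y a_y then walk along a's
      obtain ⟨p, hp⟩ := walkSegA (k := k) (m := m) y.val hy (k - 1) (by omega) (klt hk)
      have hadj : (glueGraph k m).Adj (Sum.inr y) (Sum.inl ⟨y.val, hy⟩) := by
        have := (adjAB (k := k) (m := m) y.val hy).symm
        simpa using this
      refine ⟨SimpleGraph.Walk.cons hadj p, ?_⟩
      rw [SimpleGraph.Walk.length_cons, hp, if_neg (by omega)]; omega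
  obtain ⟨p, hp⟩ := key
  refine le_antisymm ?_ ?_
  · rw [SimpleGraph.dist_comm]
    calc (glueGraph k m).dist _ _ ≤ p.length := SimpleGraph.dist_le p
      _ = _ := hp
  · have hr : (glueGraph k m).Reachable (Sum.inl ⟨k - 1, klt hk⟩) (Sum.inr y) := ⟨p.reverse⟩
    have := dist_lower (pot2 k m) (pot2_lipschitz hm2 hmk) hr.symm
    rw [SimpleGraph.dist_comm] at this
    simp only [pot2] at this
    split_ifs at this ⊢ <;> omega

end GlueAux

open GlueAux SimpleGraph in
/-- For `k ≥ 3` and `2 ≤ m ≤ k - 1`, the set `{a_1, a_k}` is a resolving set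
for `G(k,m)`, and the metric dimension of `G(k,m)` equals two. -/
theorem glueGraph_resolving_and_metricDim (k m : ℕ) (hk : 3 ≤ k)
    (hm2 : 2 ≤ m) (hmk : m ≤ k - 1) :
    IsResolvingSet (glueGraph k m)
      {Sum.inl (⟨0, by omega⟩ : Fin k), Sum.inl (⟨k - 1, by omega⟩ : Fin k)} ∧
    metricDim (glueGraph k m) = 2 := by
  set a1 : Fin k ⊕ Fin k := Sum.inl (⟨0, by omega⟩ : Fin k) with ha1
  set ak : Fin k ⊕ Fin k := Sum.inl (⟨k - 1, by omega⟩ : Fin k) with hak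
  have hres : IsResolvingSet (glueGraph k m) {a1, ak} := by
    intro u v huv
    by_cases h1 : (glueGraph k m).dist u a1 = (glueGraph k m).dist v a1
    · refine ⟨ak, Or.inr rfl, ?_⟩
      rw [SimpleGraph.dist_comm (u := u) (v := a1),
        SimpleGraph.dist_comm (u := v) (v := a1)] at h1
      rw [SimpleGraph.dist_comm (u := u) (v := ak),
        SimpleGraph.dist_comm (u := v) (v := ak)]
      rcases u with x | x <;> rcases v with y | y
      · rw [ha1, dist1_a hk x hm2, dist1_a hk y hm2] at h1
        exact absurd (show x = y by ext; omega) (fun h => huv (by rw [h]))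
      · rw [hak, dist2_a hk x hm2 hmk, dist2_b hk y hm2 hmk]
        rw [ha1, dist1_a hk x hm2, dist1_b hk y hm2 hmk] at h1
        have hx := x.isLt; have hy := y.isLt
        split_ifs at h1 ⊢ <;> omega
      · rw [hak, dist2_b hk x hm2 hmk, dist2_a hk y hm2 hmk]
        rw [ha1, dist1_b hk x hm2 hmk, dist1_a hk y hm2] at h1
        have hx := x.isLt; have hy := y.isLt
        split_ifs at h1 ⊢ <;> omega
      · rw [hak, dist2_b hk x hm2 hmk, dist2_b hk y hm2 hmk]
        rw [ha1, dist1_b hk x hm2 hmk, dist1_b hk y hm2 hmk] at h1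
        have hx := x.isLt; have hy := y.isLt
        have hxy : x.val ≠ y.val := fun h => huv (by rw [show x = y from by ext; omega])
        split_ifs at h1 ⊢ <;> omega
    · exact ⟨a1, Or.inl rfl, h1⟩
  refine ⟨hres, ?_⟩
  have hne : a1 ≠ ak := by
    simp only [ha1, hak, ne_eq, Sum.inl.injEq, Fin.ext_iff]
    omega
  have hmem : 2 ∈ {n | ∃ W : Finset (Fin k ⊕ Fin k),
      IsResolvingSet (glueGraph k m) ↑W ∧ W.card = n} := by
    refine ⟨{a1, ak}, ?_, ?_⟩
    · simpa using hres
    · rw [Finset.card_insert_of_notMem (by simpa using hne), Finset.card_singleton]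
  refine le_antisymm (Nat.sInf_le hmem) (le_csInf ⟨2, hmem⟩ ?_)
  rintro n ⟨W, hW, rfl⟩
  by_contra hlt
  push_neg at hlt
  interval_cases h : W.card
  · -- empty resolving set: impossible
    rw [Finset.card_eq_zero] at h
    subst h
    obtain ⟨w, hw, -⟩ := hW (Sum.inl ⟨0, by omega⟩) (Sum.inl ⟨1, by omega⟩)
      (by simp [Fin.ext_iff])
    simp at hw
  · -- singleton resolving set: impossible, every vertex has two neighbors
    rw [Finset.card_eq_one] at h
    obtain ⟨w, rfl⟩ := h
    have key : ∃ u v : Fin k ⊕ Fin k, u ≠ v ∧ (glueGraph k m).Adj u w ∧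
        (glueGraph k m).Adj v w := by
      rcases w with z | z
      · rcases Nat.lt_or_ge (z.val + 1) k with h | h
        · refine ⟨Sum.inr z, Sum.inl ⟨z.val + 1, h⟩, by simp,
            (adjAB z.val z.isLt).symm, ?_⟩
          have := (adjAA (k := k) (m := m) (z.val + 1) (by omega) h).symm
          simpa using this
        · refine ⟨Sum.inr z, Sum.inl ⟨z.val - 1, by omega⟩, by simp,
            (adjAB z.val z.isLt).symm, ?_⟩
          have := adjAA (k := k) (m := m) z.val (by omega) z.isLt
          simpa using this
      · rcases Nat.lt_or_ge (z.val + 1) k with h | h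
        · refine ⟨Sum.inl z, Sum.inr ⟨z.val + 1, h⟩, by simp,
            adjAB z.val z.isLt, ?_⟩
          have := (adjBB (k := k) (m := m) (z.val + 1) (by omega) h).symm
          simpa using this
        · refine ⟨Sum.inl z, Sum.inr ⟨z.val - 1, by omega⟩, by simp,
            adjAB z.val z.isLt, ?_⟩
          have := adjBB (k := k) (m := m) z.val (by omega) z.isLt
          simpa using this
    obtain ⟨u, v, huv, hu, hv⟩ := key
    obtain ⟨w', hw', hne'⟩ := hW u v huv
    simp only [Finset.coe_singleton, Set.mem_singleton_iff] at hw'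
    subst hw'
    rw [SimpleGraph.dist_eq_one_iff_adj.mpr hu, SimpleGraph.dist_eq_one_iff_adj.mpr hv] at hne'
    exact hne' rfl
end

section
/- For integers k ≥ 3 and 2 ≤ m ≤ k − 1, let G(k,m) be the graph with vertices a_1, …, a_k, b_1, …, b_k and edges a_i a_{i+1} for 1 ≤ i ≤ k−1, b_i b_{i+1} for 1 ≤ i ≤ k−1, a_i b_i for 1 ≤ i ≤ k, b_i a_{i+1} for 1 ≤ i ≤ m−1, and a_i b_{i+1} for m ≤ i ≤ k−1. Then for all 1 ≤ i ≤ k, d(a_1, a_i) = i − 1 and d(a_k, a_i) = k − i; and for all 1 ≤ j ≤ k, d(a_1, b_j) equals j if j ≤ m−1, equals m if j = m, and equals j − 1 if j ≥ m+1, while d(a_k, b_j) equals k − j if j ≤ m−1, equals k − m + 1 if j = m, and equals k − j + 1 if j ≥ m+1. -/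
section
variable {k m : ℕ}

lemma adj_aa {x : ℕ} (h : x + 1 < k) :
    (glueGraph k m).Adj (Sum.inl ⟨x, by omega⟩) (Sum.inl ⟨x+1, h⟩) := by
  simp [glueGraph, SimpleGraph.fromRel_adj, Fin.ext_iff]

lemma adj_bb {x : ℕ} (h : x + 1 < k) :
    (glueGraph k m).Adj (Sum.inr ⟨x, by omega⟩) (Sum.inr ⟨x+1, h⟩) := by
  simp [glueGraph, SimpleGraph.fromRel_adj, Fin.ext_iff]

lemma adj_ab {x : ℕ} (h : x < k) :
    (glueGraph k m).Adj (Sum.inl ⟨x, h⟩) (Sum.inr ⟨x, h⟩) := by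
  simp [glueGraph, SimpleGraph.fromRel_adj, Fin.ext_iff]

lemma adj_ba {x : ℕ} (h : x + 1 < k) (hm : x + 2 ≤ m) :
    (glueGraph k m).Adj (Sum.inr ⟨x, by omega⟩) (Sum.inl ⟨x+1, h⟩) := by
  simp [glueGraph, SimpleGraph.fromRel_adj, Fin.ext_iff]
  omega

lemma adj_ab' {x : ℕ} (h : x + 1 < k) (hm : m ≤ x + 1) :
    (glueGraph k m).Adj (Sum.inl ⟨x, by omega⟩) (Sum.inr ⟨x+1, h⟩) := by
  simp [glueGraph, SimpleGraph.fromRel_adj, Fin.ext_iff]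
  omega

end

lemma walk_lb {V : Type*} {G : SimpleGraph V} (f : V → ℕ)
    (hf : ∀ u v, G.Adj u v → f v ≤ f u + 1) :
    ∀ {s t : V} (p : G.Walk s t), f t ≤ f s + p.length := by
  intro s t p
  induction p with
  | nil => simp
  | cons h p ih =>
    rename_i u
    have := hf _ _ h
    simp only [SimpleGraph.Walk.length_cons]
    omega

section
variable {k m : ℕ}

lemma walkA (hk : 1 ≤ k) : ∀ x (hx : x < k),
    ∃ p : (glueGraph k m).Walk (Sum.inl ⟨0, by omega⟩) (Sum.inl ⟨x, hx⟩), p.length = x := by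
  intro x
  induction x with
  | zero => intro hx; exact ⟨SimpleGraph.Walk.nil, rfl⟩
  | succ n ih =>
    intro hx
    obtain ⟨p, hp⟩ := ih (by omega)
    exact ⟨p.concat (adj_aa hx), by simp [SimpleGraph.Walk.length_concat, hp]⟩

lemma walkA' (hk : 1 ≤ k) : ∀ t (ht : t ≤ k - 1),
    ∃ p : (glueGraph k m).Walk (Sum.inl ⟨k-1, by omega⟩) (Sum.inl ⟨k-1-t, by omega⟩),
      p.length = t := by
  intro t
  induction t with
  | zero => intro ht; exact ⟨SimpleGraph.Walk.nil, rfl⟩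
  | succ n ih =>
    intro ht
    obtain ⟨p, hp⟩ := ih (by omega)
    have h1 : k - 1 - (n+1) + 1 < k := by omega
    have heq : (⟨k-1-n, by omega⟩ : Fin k) = ⟨k-1-(n+1)+1, by omega⟩ := by
      simp [Fin.ext_iff]; omega
    exact ⟨(p.copy rfl (by rw [heq])).concat (adj_aa h1).symm,
      by simp [SimpleGraph.Walk.length_concat, hp]⟩

end

lemma dist_eq_of {V : Type*} {G : SimpleGraph V} (f : V → ℕ)
    (hf : ∀ u v, G.Adj u v → f v ≤ f u + 1) {s t : V} (p : G.Walk s t)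
    (hs : f s = 0) (hp : p.length = f t) : G.dist s t = f t := by
  refine le_antisymm (hp ▸ SimpleGraph.dist_le p) ?_
  obtain ⟨q, hq⟩ := SimpleGraph.Reachable.exists_walk_length_eq_dist ⟨p⟩
  have := walk_lb f hf q
  omega

section
variable {k m : ℕ}

def f1 (m : ℕ) : Fin k ⊕ Fin k → ℕ
  | .inl x => x.val
  | .inr x => if x.val < m then x.val + 1 else x.val

def f2 (k m : ℕ) : Fin k ⊕ Fin k → ℕ
  | .inl x => k - 1 - x.val
  | .inr x => if x.val + 2 ≤ m then k - 1 - x.val else k - x.val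

lemma f1_lip_s11 : ∀ u v, (glueGraph k m).Adj u v → f1 m v ≤ f1 m u + 1 := by
  intro u v huv
  rcases u with x | x <;> rcases v with y | y <;>
    simp [glueGraph, SimpleGraph.fromRel_adj, Fin.ext_iff] at huv <;>
    have hx := x.2 <;> have hy := y.2 <;>
    simp only [f1] <;> first | omega | (split_ifs <;> omega)

lemma f2_lip : ∀ u v, (glueGraph k m).Adj u v → f2 k m v ≤ f2 k m u + 1 := by
  intro u v huv
  rcases u with x | x <;> rcases v with y | y <;>
    simp [glueGraph, SimpleGraph.fromRel_adj, Fin.ext_iff] at huv <;>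
    have hx := x.2 <;> have hy := y.2 <;>
    simp only [f2] <;> first | omega | (split_ifs <;> omega)

end

section
variable {k m : ℕ}

lemma distA0 (hk : 1 ≤ k) {x : ℕ} (hx : x < k) :
    (glueGraph k m).dist (Sum.inl ⟨0, by omega⟩) (Sum.inl ⟨x, hx⟩) = x := by
  obtain ⟨p, hp⟩ := walkA (m := m) hk x hx
  simpa [f1] using dist_eq_of (f1 m) f1_lip_s11 p (by simp [f1]) (by simpa [f1] using hp)

lemma distAk (hk : 1 ≤ k) {x : ℕ} (hx : x < k) :
    (glueGraph k m).dist (Sum.inl ⟨k - 1, by omega⟩) (Sum.inl ⟨x, hx⟩) = k - 1 - x := by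
  obtain ⟨p, hp⟩ := walkA' (m := m) hk (k - 1 - x) (by omega)
  have he : (Sum.inl ⟨k - 1 - (k - 1 - x), by omega⟩ : Fin k ⊕ Fin k) = Sum.inl ⟨x, hx⟩ := by
    simp only [Sum.inl.injEq, Fin.mk.injEq]; omega
  have := dist_eq_of (f2 k m) f2_lip (p.copy rfl he) (by simp [f2])
    (by simpa [f2] using hp)
  simpa [f2] using this

lemma distB0 (hk : 1 ≤ k) (hm2 : 2 ≤ m) {x : ℕ} (hx : x < k) :
    (glueGraph k m).dist (Sum.inl ⟨0, by omega⟩) (Sum.inr ⟨x, hx⟩) =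
      if x < m then x + 1 else x := by
  by_cases hxm : x < m
  · obtain ⟨p, hp⟩ := walkA (m := m) hk x hx
    have := dist_eq_of (f1 m) f1_lip_s11 (p.concat (adj_ab hx)) (by simp [f1])
      (by simp [f1, hxm, SimpleGraph.Walk.length_concat, hp])
    simpa [f1, hxm] using this
  · obtain ⟨y, rfl⟩ : ∃ y, x = y + 1 := ⟨x - 1, by omega⟩
    obtain ⟨p, hp⟩ := walkA (m := m) hk y (by omega)
    have := dist_eq_of (f1 m) f1_lip_s11 (p.concat (adj_ab' hx (by omega))) (by simp [f1])
      (by simp [f1, hxm, SimpleGraph.Walk.length_concat, hp])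
    simpa [f1, hxm] using this

lemma distBk (hk : 3 ≤ k) (hm2 : 2 ≤ m) (hmk : m ≤ k - 1) {x : ℕ} (hx : x < k) :
    (glueGraph k m).dist (Sum.inl ⟨k - 1, Nat.sub_one_lt (by omega)⟩) (Sum.inr ⟨x, hx⟩) =
      if x + 2 ≤ m then k - 1 - x else k - x := by
  by_cases hxm : x + 2 ≤ m
  · obtain ⟨p, hp⟩ := walkA' (k := k) (m := m) (by omega) (k - 2 - x) (by omega)
    have h1 : x + 1 < k := by omega
    have he : (Sum.inl ⟨k - 1 - (k - 2 - x), by omega⟩ : Fin k ⊕ Fin k) =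
        Sum.inl ⟨x + 1, h1⟩ := by
      simp only [Sum.inl.injEq, Fin.mk.injEq]; omega
    have := dist_eq_of (f2 k m) f2_lip
      ((p.copy rfl he).concat (adj_ba h1 hxm).symm) (by simp [f2])
      (by simp [f2, hxm, SimpleGraph.Walk.length_concat, hp]; omega)
    simp only [f2] at this
    rw [this, if_pos hxm]
  · obtain ⟨p, hp⟩ := walkA' (k := k) (m := m) (by omega) (k - 1 - x) (by omega)
    have he : (Sum.inl ⟨k - 1 - (k - 1 - x), by omega⟩ : Fin k ⊕ Fin k) =
        Sum.inl ⟨x, hx⟩ := by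
      simp only [Sum.inl.injEq, Fin.mk.injEq]; omega
    have := dist_eq_of (f2 k m) f2_lip
      ((p.copy rfl he).concat (adj_ab hx)) (by simp [f2])
      (by simp [f2, hxm, SimpleGraph.Walk.length_concat, hp]; omega)
    simp only [f2] at this
    rw [this, if_neg hxm]

end

/-- For `k ≥ 3` and `2 ≤ m ≤ k - 1`, the distances in `G(k,m)` from `a_1` and
`a_k` to all vertices: `d(a_1, a_i) = i - 1`, `d(a_k, a_i) = k - i`, and
`d(a_1, b_j)` equals `j` if `j ≤ m-1`, equals `m` if `j = m`, and equals
`j - 1` if `j ≥ m+1`, while `d(a_k, b_j)` equals `k - j` if `j ≤ m-1`, equals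
`k - m + 1` if `j = m`, and equals `k - j + 1` if `j ≥ m+1`. -/
theorem glueGraph_dist (k m : ℕ) (hk : 3 ≤ k) (hm2 : 2 ≤ m) (hmk : m ≤ k - 1) :
    (∀ (i : ℕ) (_hi1 : 1 ≤ i) (_hik : i ≤ k),
      (glueGraph k m).dist (Sum.inl (⟨0, by omega⟩ : Fin k))
        (Sum.inl (⟨i - 1, by omega⟩ : Fin k)) = i - 1 ∧
      (glueGraph k m).dist (Sum.inl (⟨k - 1, by omega⟩ : Fin k))
        (Sum.inl (⟨i - 1, by omega⟩ : Fin k)) = k - i) ∧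
    (∀ (j : ℕ) (_hj1 : 1 ≤ j) (_hjk : j ≤ k),
      ((glueGraph k m).dist (Sum.inl (⟨0, by omega⟩ : Fin k))
        (Sum.inr (⟨j - 1, by omega⟩ : Fin k)) =
          if j ≤ m - 1 then j else if j = m then m else j - 1) ∧
      ((glueGraph k m).dist (Sum.inl (⟨k - 1, by omega⟩ : Fin k))
        (Sum.inr (⟨j - 1, by omega⟩ : Fin k)) =
          if j ≤ m - 1 then k - j else if j = m then k - m + 1 else k - j + 1)) := by
  refine ⟨fun i hi1 hik => ⟨?_, ?_⟩, fun j hj1 hjk => ⟨?_, ?_⟩⟩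
  · exact distA0 (by omega) (by omega)
  · rw [distAk (by omega) (by omega)]; omega
  · rw [distB0 (by omega) hm2 (by omega)]; split_ifs <;> omega
  · rw [distBk hk hm2 hmk (by omega)]; split_ifs <;> omega
end
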